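/- arXiv:2402.05771 — 8 statements merged into one kernel-verified Lean document; each statement's English description precedes it below -/
import Mathlib

section
/- The number of noncrossing (1,2)-configurations of [n-1] (sets of pairwise disjoint singletons and 2-element subsets of {1,...,n-1} with no crossing pairs) equals the Catalan number Cat_n = (1/(n+1))·C(2n,n). -/
open scoped Classical

def IsConfig (m : ℕ) (x : Finset (Finset ℕ)) : Prop :=
  (∀ B ∈ x, B ⊆ Finset.Icc 1 m ∧ (B.card = 1 ∨ B.card = 2)) ∧
  (∀ B ∈ x, ∀ C ∈ x, B ≠ C → Disjoint B C) ∧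
  (∀ i₁ j₁ i₂ j₂ : ℕ, ({i₁, j₁} : Finset ℕ) ∈ x → ({i₂, j₂} : Finset ℕ) ∈ x →
    i₁ < i₂ → i₂ < j₁ → j₁ < j₂ → False)

noncomputable def Configs (m : ℕ) : Finset (Finset (Finset ℕ)) :=
  ((Finset.Icc 1 m).powerset.powerset).filter (IsConfig m)

/-! Auxiliary development -/

def NC (x : Finset (Finset ℕ)) : Prop :=
  ∀ i₁ j₁ i₂ j₂ : ℕ, ({i₁, j₁} : Finset ℕ) ∈ x → ({i₂, j₂} : Finset ℕ) ∈ x →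
    i₁ < i₂ → i₂ < j₁ → j₁ < j₂ → False

def IsConfigOn (s : Finset ℕ) (x : Finset (Finset ℕ)) : Prop :=
  (∀ B ∈ x, B ⊆ s ∧ (B.card = 1 ∨ B.card = 2)) ∧
  (∀ B ∈ x, ∀ C ∈ x, B ≠ C → Disjoint B C) ∧ NC x

noncomputable def ConfigsOn (s : Finset ℕ) : Finset (Finset (Finset ℕ)) :=
  (s.powerset.powerset).filter (IsConfigOn s)

lemma configs_eq (m : ℕ) : Configs m = ConfigsOn (Finset.Icc 1 m) := rfl

lemma mem_configsOn {s : Finset ℕ} {x : Finset (Finset ℕ)} :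
    x ∈ ConfigsOn s ↔ IsConfigOn s x := by
  constructor
  · exact fun h => (Finset.mem_filter.mp h).2
  · intro h
    refine Finset.mem_filter.mpr ⟨?_, h⟩
    rw [Finset.mem_powerset]
    intro B hB
    exact Finset.mem_powerset.mpr (h.1 B hB).1

lemma block_nonempty {s x} (h : IsConfigOn s x) {B : Finset ℕ} (hB : B ∈ x) : B.Nonempty := by
  rcases (h.1 B hB).2 with h1 | h1 <;> [exact Finset.card_pos.mp (by omega); exact Finset.card_pos.mp (by omega)]

lemma block_unique {s x} (h : IsConfigOn s x) {B C : Finset ℕ} (hB : B ∈ x) (hC : C ∈ x)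
    {a : ℕ} (haB : a ∈ B) (haC : a ∈ C) : B = C := by
  by_contra hne
  exact (Finset.disjoint_left.mp (h.2.1 B hB C hC hne) haB) haC

lemma isConfigOn_mono {s t x} (h : IsConfigOn s x) (hst : s ⊆ t) : IsConfigOn t x :=
  ⟨fun B hB => ⟨(h.1 B hB).1.trans hst, (h.1 B hB).2⟩, h.2.1, h.2.2⟩

lemma isConfigOn_subset {s t : Finset ℕ} {x y : Finset (Finset ℕ)} (h : IsConfigOn s x)
    (hyx : y ⊆ x) (hyt : ∀ B ∈ y, B ⊆ t) : IsConfigOn t y :=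
  ⟨fun B hB => ⟨hyt B hB, (h.1 B (hyx hB)).2⟩,
   fun B hB C hC hne => h.2.1 B (hyx hB) C (hyx hC) hne,
   fun i₁ j₁ i₂ j₂ h1 h2 => h.2.2 i₁ j₁ i₂ j₂ (hyx h1) (hyx h2)⟩

lemma image_pair (f : ℕ → ℕ) (a b : ℕ) : ({a, b} : Finset ℕ).image f = {f a, f b} := by
  simp [Finset.image_insert]

lemma NC_image_add {x : Finset (Finset ℕ)} (k : ℕ) (h : NC x) :
    NC (x.image (fun B => B.image (· + k))) := by
  intro i₁ j₁ i₂ j₂ h1 h2 l1 l2 l3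
  obtain ⟨B, hB, hBeq⟩ := Finset.mem_image.mp h1
  obtain ⟨C, hC, hCeq⟩ := Finset.mem_image.mp h2
  have hki₁ : k ≤ i₁ := by
    have : i₁ ∈ B.image (· + k) := by rw [hBeq]; simp
    obtain ⟨a, _, ha⟩ := Finset.mem_image.mp this; omega
  have hkj₁ : k ≤ j₁ := by
    have : j₁ ∈ B.image (· + k) := by rw [hBeq]; simp
    obtain ⟨a, _, ha⟩ := Finset.mem_image.mp this; omega
  have hBval : B = {i₁ - k, j₁ - k} := by
    have : (B.image (· + k)).image (· - k) = B := by
      rw [Finset.image_image]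
      have : ∀ a ∈ B, ((· - k) ∘ (· + k)) a = id a := by intro a _; simp
      rw [Finset.image_congr this, Finset.image_id]
    rw [← this, hBeq, image_pair]
  have hkc : k ≤ i₂ ∧ k ≤ j₂ := by
    constructor
    · have : i₂ ∈ C.image (· + k) := by rw [hCeq]; simp
      obtain ⟨a, _, ha⟩ := Finset.mem_image.mp this; omega
    · have : j₂ ∈ C.image (· + k) := by rw [hCeq]; simp
      obtain ⟨a, _, ha⟩ := Finset.mem_image.mp this; omega
  have hCval : C = {i₂ - k, j₂ - k} := by
    have : (C.image (· + k)).image (· - k) = C := by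
      rw [Finset.image_image]
      have : ∀ a ∈ C, ((· - k) ∘ (· + k)) a = id a := by intro a _; simp
      rw [Finset.image_congr this, Finset.image_id]
    rw [← this, hCeq, image_pair]
  exact h (i₁ - k) (j₁ - k) (i₂ - k) (j₂ - k) (hBval ▸ hB) (hCval ▸ hC)
    (by omega) (by omega) (by omega)

lemma NC_image_sub {x : Finset (Finset ℕ)} (k : ℕ) (hk : ∀ B ∈ x, ∀ a ∈ B, k ≤ a) (h : NC x) :
    NC (x.image (fun B => B.image (· - k))) := by
  intro i₁ j₁ i₂ j₂ h1 h2 l1 l2 l3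
  obtain ⟨B, hB, hBeq⟩ := Finset.mem_image.mp h1
  obtain ⟨C, hC, hCeq⟩ := Finset.mem_image.mp h2
  have hBval : B = {i₁ + k, j₁ + k} := by
    have : (B.image (· - k)).image (· + k) = B := by
      rw [Finset.image_image]
      have : ∀ a ∈ B, ((· + k) ∘ (· - k)) a = id a := by
        intro a ha; have := hk B hB a ha; simp; omega
      rw [Finset.image_congr this, Finset.image_id]
    rw [← this, hBeq, image_pair]
  have hCval : C = {i₂ + k, j₂ + k} := by
    have : (C.image (· - k)).image (· + k) = C := by
      rw [Finset.image_image]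
      have : ∀ a ∈ C, ((· + k) ∘ (· - k)) a = id a := by
        intro a ha; have := hk C hC a ha; simp; omega
      rw [Finset.image_congr this, Finset.image_id]
    rw [← this, hCeq, image_pair]
  exact h (i₁ + k) (j₁ + k) (i₂ + k) (j₂ + k) (hBval ▸ hB) (hCval ▸ hC)
    (by omega) (by omega) (by omega)

lemma isConfigOn_image_add {s x} (k : ℕ) (h : IsConfigOn s x) :
    IsConfigOn (s.image (· + k)) (x.image (fun B => B.image (· + k))) := by
  have hinj : Function.Injective (· + k) := fun a b hab => by simpa using hab
  refine ⟨?_, ?_, NC_image_add k h.2.2⟩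
  · intro B' hB'
    obtain ⟨B, hB, rfl⟩ := Finset.mem_image.mp hB'
    refine ⟨Finset.image_subset_image (h.1 B hB).1, ?_⟩
    rw [Finset.card_image_of_injective _ hinj]
    exact (h.1 B hB).2
  · intro B' hB' C' hC' hne
    obtain ⟨B, hB, rfl⟩ := Finset.mem_image.mp hB'
    obtain ⟨C, hC, rfl⟩ := Finset.mem_image.mp hC'
    rw [Finset.disjoint_image hinj]
    exact h.2.1 B hB C hC (fun hbc => hne (by rw [hbc]))

lemma isConfigOn_image_sub {s x} (k : ℕ) (hs : ∀ a ∈ s, k ≤ a) (h : IsConfigOn s x) :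
    IsConfigOn (s.image (· - k)) (x.image (fun B => B.image (· - k))) := by
  have hk : ∀ B ∈ x, ∀ a ∈ B, k ≤ a := fun B hB a ha => hs a ((h.1 B hB).1 ha)
  refine ⟨?_, ?_, NC_image_sub k hk h.2.2⟩
  · intro B' hB'
    obtain ⟨B, hB, rfl⟩ := Finset.mem_image.mp hB'
    refine ⟨Finset.image_subset_image (h.1 B hB).1, ?_⟩
    have : (B.image (· - k)).card = B.card := by
      apply Finset.card_image_of_injOn
      intro a ha b hb hab
      have h1 := hk B hB a ha; have h2 := hk B hB b hb
      simp only at hab; omega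
    rw [this]; exact (h.1 B hB).2
  · intro B' hB' C' hC' hne
    obtain ⟨B, hB, rfl⟩ := Finset.mem_image.mp hB'
    obtain ⟨C, hC, rfl⟩ := Finset.mem_image.mp hC'
    have hBC : B ≠ C := fun hbc => hne (by rw [hbc])
    have hdisj := h.2.1 B hB C hC hBC
    rw [Finset.disjoint_left]
    intro a haB haC
    obtain ⟨b, hb, rfl⟩ := Finset.mem_image.mp haB
    obtain ⟨c, hc, hcb⟩ := Finset.mem_image.mp haC
    have := hk B hB b hb; have := hk C hC c hc
    have : c = b := by omega
    exact (Finset.disjoint_left.mp hdisj hb) (this ▸ hc)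

noncomputable def F (m : ℕ) : ℕ := (ConfigsOn (Finset.Icc 1 m)).card

lemma card_configsOn_shift (k m : ℕ) :
    (ConfigsOn (Finset.Icc (k + 1) (m + k))).card = F m := by
  apply Finset.card_bij' (fun x _ => x.image (fun B => B.image (· - k)))
    (fun x _ => x.image (fun B => B.image (· + k)))
  · intro x hx
    rw [mem_configsOn] at hx
    rw [Finset.image_image]
    have : ∀ B ∈ x, ((fun B : Finset ℕ => B.image (· + k)) ∘ (fun B : Finset ℕ => B.image (· - k))) B = id B := by
      intro B hB
      simp only [Function.comp, Finset.image_image, id]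
      have : ∀ a ∈ B, ((· + k) ∘ (· - k)) a = id a := by
        intro a ha
        have := (hx.1 B hB).1 ha
        rw [Finset.mem_Icc] at this
        simp only [Function.comp, id]; omega
      rw [Finset.image_congr this, Finset.image_id]
    rw [Finset.image_congr this, Finset.image_id]
  · intro x hx
    rw [Finset.image_image]
    have : ∀ B ∈ x, ((fun B : Finset ℕ => B.image (· - k)) ∘ (fun B : Finset ℕ => B.image (· + k))) B = id B := by
      intro B hB
      simp only [Function.comp, Finset.image_image, id]
      have : ∀ a ∈ B, ((· - k) ∘ (· + k)) a = id a := by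
        intro a ha; simp only [Function.comp, id]; omega
      rw [Finset.image_congr this, Finset.image_id]
    rw [Finset.image_congr this, Finset.image_id]


  · intro x hx
    rw [mem_configsOn] at hx ⊢
    have h1 := isConfigOn_image_sub k (fun a ha => by
      rw [Finset.mem_Icc] at ha; omega) hx
    refine isConfigOn_mono h1 ?_
    intro a ha
    obtain ⟨b, hb, rfl⟩ := Finset.mem_image.mp ha
    rw [Finset.mem_Icc] at hb ⊢; omega
  · intro x hx
    rw [mem_configsOn] at hx ⊢
    have h1 := isConfigOn_image_add k hx
    refine isConfigOn_mono h1 ?_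
    intro a ha
    obtain ⟨b, hb, rfl⟩ := Finset.mem_image.mp ha
    rw [Finset.mem_Icc] at hb ⊢; omega

lemma configsOn_empty : ConfigsOn ∅ = {∅} := by
  ext x
  rw [mem_configsOn, Finset.mem_singleton]
  constructor
  · intro h
    rw [Finset.eq_empty_iff_forall_notMem]
    intro B hB
    have h1 := (h.1 B hB).1
    have h2 := block_nonempty h hB
    obtain ⟨a, ha⟩ := h2
    exact absurd (h1 ha) (Finset.notMem_empty a)
  · rintro rfl
    exact ⟨fun B hB => absurd hB (Finset.notMem_empty B),
      fun B hB => absurd hB (Finset.notMem_empty B),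
      fun i₁ j₁ i₂ j₂ h1 => absurd h1 (Finset.notMem_empty _)⟩

lemma F_zero : F 0 = 1 := by
  unfold F
  rw [Finset.Icc_eq_empty (by omega), configsOn_empty, Finset.card_singleton]

noncomputable def cls (m : ℕ) (x : Finset (Finset ℕ)) : ℕ :=
  x.sup (fun B => if m + 1 ∈ B then B.sum id - m else 0)

lemma block_structure {m : ℕ} {x : Finset (Finset ℕ)} {B₀ : Finset ℕ}
    (h : IsConfigOn (Finset.Icc 1 (m + 1)) x) (hB : B₀ ∈ x) (hm : m + 1 ∈ B₀) :
    B₀ = {m + 1} ∨ ∃ a, 1 ≤ a ∧ a ≤ m ∧ B₀ = {a, m + 1} := by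
  rcases (h.1 B₀ hB).2 with hc | hc
  · left
    obtain ⟨b, rfl⟩ := Finset.card_eq_one.mp hc
    rw [Finset.mem_singleton] at hm; rw [hm]
  · right
    obtain ⟨u, v, huv, rfl⟩ := Finset.card_eq_two.mp hc
    have hsub := (h.1 _ hB).1
    rcases Finset.mem_insert.mp hm with h1 | h1
    · have hv : v ∈ Finset.Icc 1 (m + 1) := hsub (by simp)
      rw [Finset.mem_Icc] at hv
      exact ⟨v, hv.1, by omega, by rw [← h1, Finset.pair_comm]⟩
    · rw [Finset.mem_singleton] at h1
      have hu : u ∈ Finset.Icc 1 (m + 1) := hsub (by simp)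
      rw [Finset.mem_Icc] at hu
      exact ⟨u, hu.1, by omega, by rw [← h1]⟩

lemma cls_eq_of_mem {m : ℕ} {x : Finset (Finset ℕ)} {B₀ : Finset ℕ}
    (h : IsConfigOn (Finset.Icc 1 (m + 1)) x) (hB : B₀ ∈ x) (hm : m + 1 ∈ B₀) :
    cls m x = B₀.sum id - m := by
  apply le_antisymm
  · apply Finset.sup_le
    intro B hBx
    by_cases hmB : m + 1 ∈ B
    · rw [if_pos hmB, block_unique h hBx hB hmB hm]
    · rw [if_neg hmB]; exact Nat.zero_le _
  · have := Finset.le_sup (f := fun B => if m + 1 ∈ B then B.sum id - m else 0) hB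
    simpa [cls, hm] using this

lemma cls_eq_zero_iff {m : ℕ} {x : Finset (Finset ℕ)}
    (h : IsConfigOn (Finset.Icc 1 (m + 1)) x) :
    cls m x = 0 ↔ ∀ B ∈ x, m + 1 ∉ B := by
  constructor
  · intro h0
    by_contra hc
    push_neg at hc
    obtain ⟨B₀, hB, hm⟩ := hc
    rw [cls_eq_of_mem h hB hm] at h0
    have : m + 1 ≤ B₀.sum id :=
      Finset.single_le_sum (f := id) (fun a _ => Nat.zero_le a) hm
    omega
  · intro hall
    have : cls m x ≤ 0 := Finset.sup_le (fun B hB => by rw [if_neg (hall B hB)])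
    omega

lemma sum_pair_arc (a m : ℕ) (h : a ≤ m) : ({a, m + 1} : Finset ℕ).sum id = a + (m + 1) :=
  Finset.sum_pair (by omega)

lemma cls_eq_one_iff {m : ℕ} {x : Finset (Finset ℕ)}
    (h : IsConfigOn (Finset.Icc 1 (m + 1)) x) :
    cls m x = 1 ↔ ({m + 1} : Finset ℕ) ∈ x := by
  constructor
  · intro h1
    have hne : ¬ (∀ B ∈ x, m + 1 ∉ B) := by
      intro hc; rw [(cls_eq_zero_iff h).mpr hc] at h1; omega
    push_neg at hne
    obtain ⟨B₀, hB, hm⟩ := hne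
    rcases block_structure h hB hm with rfl | ⟨a, ha1, ha2, rfl⟩
    · exact hB
    · rw [cls_eq_of_mem h hB hm, sum_pair_arc a m ha2] at h1
      omega
  · intro hmem
    rw [cls_eq_of_mem h hmem (Finset.mem_singleton_self _), Finset.sum_singleton]
    simp

lemma cls_eq_succ_iff {m i : ℕ} {x : Finset (Finset ℕ)} (hi1 : 1 ≤ i) (hi2 : i ≤ m)
    (h : IsConfigOn (Finset.Icc 1 (m + 1)) x) :
    cls m x = i + 1 ↔ ({i, m + 1} : Finset ℕ) ∈ x := by
  constructor
  · intro h1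
    have hne : ¬ (∀ B ∈ x, m + 1 ∉ B) := by
      intro hc; rw [(cls_eq_zero_iff h).mpr hc] at h1; omega
    push_neg at hne
    obtain ⟨B₀, hB, hm⟩ := hne
    rcases block_structure h hB hm with rfl | ⟨a, ha1, ha2, rfl⟩
    · rw [cls_eq_of_mem h hB hm, Finset.sum_singleton] at h1
      simp only [id_eq] at h1
      omega
    · rw [cls_eq_of_mem h hB hm, sum_pair_arc a m ha2] at h1
      have : a = i := by omega
      rwa [← this]
  · intro hmem
    rw [cls_eq_of_mem h hmem (by simp), sum_pair_arc i m hi2]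
    omega

lemma cls_lt {m : ℕ} {x : Finset (Finset ℕ)}
    (h : IsConfigOn (Finset.Icc 1 (m + 1)) x) : cls m x < m + 2 := by
  by_cases hc : ∀ B ∈ x, m + 1 ∉ B
  · rw [(cls_eq_zero_iff h).mpr hc]; omega
  · push_neg at hc
    obtain ⟨B₀, hB, hm⟩ := hc
    rcases block_structure h hB hm with rfl | ⟨a, ha1, ha2, rfl⟩
    · rw [cls_eq_of_mem h hB hm, Finset.sum_singleton]; simp only [id_eq]; omega
    · rw [cls_eq_of_mem h hB hm, sum_pair_arc a m ha2]; omega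

lemma fiber_zero (m : ℕ) :
    (ConfigsOn (Finset.Icc 1 (m + 1))).filter (fun x => cls m x = 0)
      = ConfigsOn (Finset.Icc 1 m) := by
  ext x
  rw [Finset.mem_filter, mem_configsOn, mem_configsOn]
  constructor
  · rintro ⟨hx, h0⟩
    have hall := (cls_eq_zero_iff hx).mp h0
    refine ⟨fun B hB => ⟨?_, (hx.1 B hB).2⟩, hx.2.1, hx.2.2⟩
    intro a ha
    have h1 := (hx.1 B hB).1 ha
    rw [Finset.mem_Icc] at h1 ⊢
    have : a ≠ m + 1 := fun h => hall B hB (h ▸ ha)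
    omega
  · intro hx
    have hx' : IsConfigOn (Finset.Icc 1 (m + 1)) x :=
      isConfigOn_mono hx (Finset.Icc_subset_Icc le_rfl (by omega))
    refine ⟨hx', (cls_eq_zero_iff hx').mpr ?_⟩
    intro B hB hm
    have := (hx.1 B hB).1 hm
    rw [Finset.mem_Icc] at this; omega

lemma card_fiber_one (m : ℕ) :
    ((ConfigsOn (Finset.Icc 1 (m + 1))).filter (fun x => cls m x = 1)).card = F m := by
  unfold F
  have hnotmem : ∀ x ∈ ConfigsOn (Finset.Icc 1 m), ({m + 1} : Finset ℕ) ∉ x := by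
    intro x hx hc
    have := ((mem_configsOn.mp hx).1 _ hc).1 (Finset.mem_singleton_self (m + 1))
    rw [Finset.mem_Icc] at this; omega
  apply Finset.card_bij' (fun x _ => x.erase {m + 1})
    (fun x _ => insert ({m + 1} : Finset ℕ) x)
  · intro x hx
    obtain ⟨hx1, hx2⟩ := Finset.mem_filter.mp hx
    exact Finset.insert_erase ((cls_eq_one_iff (mem_configsOn.mp hx1)).mp hx2)
  · intro x hx
    exact Finset.erase_insert (hnotmem x hx)
  · intro x hx
    obtain ⟨hx1, hx2⟩ := Finset.mem_filter.mp hx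
    rw [mem_configsOn] at hx1 ⊢
    have hball := (cls_eq_one_iff hx1).mp hx2
    apply isConfigOn_subset hx1 (Finset.erase_subset _ _)
    intro B hB
    obtain ⟨hBne, hBx⟩ := Finset.mem_erase.mp hB
    have hdisj := hx1.2.1 B hBx _ hball hBne
    intro a ha
    have h1 := (hx1.1 B hBx).1 ha
    rw [Finset.mem_Icc] at h1 ⊢
    have : a ≠ m + 1 := by
      intro h; exact Finset.disjoint_left.mp hdisj ha (by simp [h])
    omega
  · intro x hx
    rw [mem_configsOn] at hx
    have hcfg : IsConfigOn (Finset.Icc 1 (m + 1)) (insert ({m + 1} : Finset ℕ) x) := by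
      refine ⟨?_, ?_, ?_⟩
      · intro B hB
        rcases Finset.mem_insert.mp hB with rfl | hBx
        · refine ⟨?_, Or.inl (Finset.card_singleton _)⟩
          intro a ha
          rw [Finset.mem_singleton] at ha
          rw [Finset.mem_Icc]; omega
        · exact ⟨((hx.1 B hBx).1).trans (Finset.Icc_subset_Icc le_rfl (by omega)),
            (hx.1 B hBx).2⟩
      · intro B hB C hC hne
        have hnm : ∀ D ∈ x, (m + 1) ∉ D := by
          intro D hD hmem
          have := (hx.1 D hD).1 hmem
          rw [Finset.mem_Icc] at this; omega
        rcases Finset.mem_insert.mp hB with rfl | hBx <;>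
          rcases Finset.mem_insert.mp hC with rfl | hCx
        · exact absurd rfl hne
        · exact Finset.disjoint_singleton_left.mpr (hnm C hCx)
        · exact Finset.disjoint_singleton_right.mpr (hnm B hBx)
        · exact hx.2.1 B hBx C hCx hne
      · intro i₁ j₁ i₂ j₂ h1 h2 l1 l2 l3
        rcases Finset.mem_insert.mp h1 with he | h1x
        · have hu : i₁ ∈ ({m + 1} : Finset ℕ) := by rw [← he]; simp
          have hv : j₁ ∈ ({m + 1} : Finset ℕ) := by rw [← he]; simp
          rw [Finset.mem_singleton] at hu hv
          omega
        · rcases Finset.mem_insert.mp h2 with he | h2x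
          · have hu : i₂ ∈ ({m + 1} : Finset ℕ) := by rw [← he]; simp
            have hv : j₂ ∈ ({m + 1} : Finset ℕ) := by rw [← he]; simp
            rw [Finset.mem_singleton] at hu hv
            omega
          · exact hx.2.2 i₁ j₁ i₂ j₂ h1x h2x l1 l2 l3
    refine Finset.mem_filter.mpr ⟨mem_configsOn.mpr hcfg, ?_⟩
    exact (cls_eq_one_iff hcfg).mpr (Finset.mem_insert_self _ _)

lemma arc_split {m i : ℕ} {x : Finset (Finset ℕ)} (hi1 : 1 ≤ i) (hi2 : i ≤ m)
    (h : IsConfigOn (Finset.Icc 1 (m + 1)) x) (harc : ({i, m + 1} : Finset ℕ) ∈ x)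
    {B : Finset ℕ} (hB : B ∈ x) (hne : B ≠ {i, m + 1}) :
    B ⊆ Finset.Icc 1 (i - 1) ∨ B ⊆ Finset.Icc (i + 1) m := by
  have hdisj := h.2.1 B hB _ harc hne
  have helem : ∀ a ∈ B, 1 ≤ a ∧ a ≤ m ∧ a ≠ i := by
    intro a ha
    have h1 := (h.1 B hB).1 ha
    rw [Finset.mem_Icc] at h1
    have h2 : a ≠ i := fun hai => Finset.disjoint_left.mp hdisj ha (by simp [hai])
    have h3 : a ≠ m + 1 := fun hai => Finset.disjoint_left.mp hdisj ha (by simp [hai])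
    exact ⟨h1.1, by omega, h2⟩
  have hkey : ∀ a ∈ B, ∀ b ∈ B, a < i → i < b → False := by
    intro a ha b hb hai hib
    have hab : a ≠ b := by omega
    have hcard : B.card ≤ 2 := by rcases (h.1 B hB).2 with h' | h' <;> omega
    have hBeq : B = {a, b} := (Finset.eq_of_subset_of_card_le
      (Finset.insert_subset ha (Finset.singleton_subset_iff.mpr hb))
      (by rw [Finset.card_pair hab]; exact hcard)).symm
    have hbm := helem b hb
    exact h.2.2 a b i (m + 1) (hBeq ▸ hB) harc hai hib (by omega)
  by_cases hex : ∃ a ∈ B, a < i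
  · left
    obtain ⟨a₀, ha₀, hlt⟩ := hex
    intro b hb
    have hbm := helem b hb
    rw [Finset.mem_Icc]
    rcases lt_or_gt_of_ne hbm.2.2 with hbi | hbi
    · omega
    · exact (hkey a₀ ha₀ b hb hlt hbi).elim
  · right
    push_neg at hex
    intro b hb
    have hbm := helem b hb
    have := hex b hb
    rw [Finset.mem_Icc]; omega

lemma card_fiber_arc (m i : ℕ) (hi1 : 1 ≤ i) (hi2 : i ≤ m) :
    ((ConfigsOn (Finset.Icc 1 (m + 1))).filter (fun x => cls m x = i + 1)).card
      = F (i - 1) * F (m - i) := by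
  have hcard2 : (ConfigsOn (Finset.Icc (i + 1) m)).card = F (m - i) := by
    have he : Finset.Icc (i + 1) m = Finset.Icc (i + 1) ((m - i) + i) := by congr 1; omega
    rw [he, card_configsOn_shift]
  have key : ((ConfigsOn (Finset.Icc 1 (m + 1))).filter (fun x => cls m x = i + 1)).card
      = ((ConfigsOn (Finset.Icc 1 (i - 1))) ×ˢ (ConfigsOn (Finset.Icc (i + 1) m))).card := by
    apply Finset.card_bij'
      (fun x _ => (x.filter (fun B => B ⊆ Finset.Icc 1 (i - 1)),
                   x.filter (fun B => B ⊆ Finset.Icc (i + 1) m)))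
      (fun p _ => insert ({i, m + 1} : Finset ℕ) (p.1 ∪ p.2))
    · -- left_inv
      intro x hx
      obtain ⟨hx1, hx2⟩ := Finset.mem_filter.mp hx
      rw [mem_configsOn] at hx1
      have harc := (cls_eq_succ_iff hi1 hi2 hx1).mp hx2
      apply Finset.Subset.antisymm
      · intro B hB
        rcases Finset.mem_insert.mp hB with rfl | hB2
        · exact harc
        · rcases Finset.mem_union.mp hB2 with h' | h' <;> exact Finset.filter_subset _ _ h'
      · intro B hB
        by_cases hne : B = {i, m + 1}
        · rw [hne]; exact Finset.mem_insert_self _ _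
        · rcases arc_split hi1 hi2 hx1 harc hB hne with hs | hs
          · exact Finset.mem_insert.mpr (Or.inr (Finset.mem_union_left _
              (Finset.mem_filter.mpr ⟨hB, hs⟩)))
          · exact Finset.mem_insert.mpr (Or.inr (Finset.mem_union_right _
              (Finset.mem_filter.mpr ⟨hB, hs⟩)))
    · -- right_inv
      rintro ⟨x₁, x₂⟩ hp
      rw [Finset.mem_product] at hp
      obtain ⟨hp1, hp2⟩ := hp
      rw [mem_configsOn] at hp1 hp2
      have hS1 : ∀ B ∈ x₁, B ⊆ Finset.Icc 1 (i - 1) := fun B hB => (hp1.1 B hB).1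
      have hS2 : ∀ B ∈ x₂, B ⊆ Finset.Icc (i + 1) m := fun B hB => (hp2.1 B hB).1
      have harcS1 : ¬ ({i, m + 1} : Finset ℕ) ⊆ Finset.Icc 1 (i - 1) := by
        intro hsub
        have := hsub (Finset.mem_insert_self i _)
        rw [Finset.mem_Icc] at this; omega
      have harcS2 : ¬ ({i, m + 1} : Finset ℕ) ⊆ Finset.Icc (i + 1) m := by
        intro hsub
        have := hsub (Finset.mem_insert_self i _)
        rw [Finset.mem_Icc] at this; omega
      have hx₂S1 : ∀ B ∈ x₂, ¬ B ⊆ Finset.Icc 1 (i - 1) := by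
        intro B hB hsub
        obtain ⟨a, ha⟩ := block_nonempty hp2 hB
        have h1 := hS2 B hB ha; have h2 := hsub ha
        rw [Finset.mem_Icc] at h1 h2; omega
      have hx₁S2 : ∀ B ∈ x₁, ¬ B ⊆ Finset.Icc (i + 1) m := by
        intro B hB hsub
        obtain ⟨a, ha⟩ := block_nonempty hp1 hB
        have h1 := hS1 B hB ha; have h2 := hsub ha
        rw [Finset.mem_Icc] at h1 h2; omega
      have e1 : (insert ({i, m + 1} : Finset ℕ) (x₁ ∪ x₂)).filter
          (fun B => B ⊆ Finset.Icc 1 (i - 1)) = x₁ := by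
        ext B
        rw [Finset.mem_filter]
        constructor
        · rintro ⟨hB, hsub⟩
          rcases Finset.mem_insert.mp hB with rfl | hB2
          · exact absurd hsub harcS1
          · rcases Finset.mem_union.mp hB2 with h' | h'
            · exact h'
            · exact absurd hsub (hx₂S1 B h')
        · intro hB
          exact ⟨Finset.mem_insert.mpr (Or.inr (Finset.mem_union_left _ hB)), hS1 B hB⟩
      have e2 : (insert ({i, m + 1} : Finset ℕ) (x₁ ∪ x₂)).filter
          (fun B => B ⊆ Finset.Icc (i + 1) m) = x₂ := by
        ext B
        rw [Finset.mem_filter]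
        constructor
        · rintro ⟨hB, hsub⟩
          rcases Finset.mem_insert.mp hB with rfl | hB2
          · exact absurd hsub harcS2
          · rcases Finset.mem_union.mp hB2 with h' | h'
            · exact absurd hsub (hx₁S2 B h')
            · exact h'
        · intro hB
          exact ⟨Finset.mem_insert.mpr (Or.inr (Finset.mem_union_right _ hB)), hS2 B hB⟩
      simp only [e1, e2]
    · -- hi
      intro x hx
      obtain ⟨hx1, _⟩ := Finset.mem_filter.mp hx
      rw [mem_configsOn] at hx1
      rw [Finset.mem_product]
      constructor <;> rw [mem_configsOn]
      · exact isConfigOn_subset hx1 (Finset.filter_subset _ _)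
          (fun B hB => (Finset.mem_filter.mp hB).2)
      · exact isConfigOn_subset hx1 (Finset.filter_subset _ _)
          (fun B hB => (Finset.mem_filter.mp hB).2)
    · -- hj
      rintro ⟨x₁, x₂⟩ hp
      rw [Finset.mem_product] at hp
      obtain ⟨hp1, hp2⟩ := hp
      rw [mem_configsOn] at hp1 hp2
      have hb1 : ∀ B ∈ x₁, ∀ a ∈ B, 1 ≤ a ∧ a ≤ i - 1 := by
        intro B hB a ha
        have := (hp1.1 B hB).1 ha; rw [Finset.mem_Icc] at this; omega
      have hb2 : ∀ B ∈ x₂, ∀ a ∈ B, i + 1 ≤ a ∧ a ≤ m := by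
        intro B hB a ha
        have := (hp2.1 B hB).1 ha; rw [Finset.mem_Icc] at this; omega
      have hcfg : IsConfigOn (Finset.Icc 1 (m + 1))
          (insert ({i, m + 1} : Finset ℕ) (x₁ ∪ x₂)) := by
        refine ⟨?_, ?_, ?_⟩
        · intro B hB
          rcases Finset.mem_insert.mp hB with rfl | hB2
          · constructor
            · intro a ha
              rw [Finset.mem_insert, Finset.mem_singleton] at ha
              rw [Finset.mem_Icc]; omega
            · exact Or.inr (Finset.card_pair (by omega))
          · rcases Finset.mem_union.mp hB2 with h' | h'
            · exact ⟨fun a ha => by rw [Finset.mem_Icc]; have := hb1 B h' a ha; omega,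
                (hp1.1 B h').2⟩
            · exact ⟨fun a ha => by rw [Finset.mem_Icc]; have := hb2 B h' a ha; omega,
                (hp2.1 B h').2⟩
        · intro B hB C hC hne
          have harcd : ∀ D : Finset ℕ,
              ((∀ a ∈ D, 1 ≤ a ∧ a ≤ i - 1) ∨ (∀ a ∈ D, i + 1 ≤ a ∧ a ≤ m)) →
              Disjoint ({i, m + 1} : Finset ℕ) D := by
            intro D hD
            rw [Finset.disjoint_left]
            intro a ha haD
            rw [Finset.mem_insert, Finset.mem_singleton] at ha
            rcases hD with h' | h' <;> have := h' a haD <;> omega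
          rcases Finset.mem_insert.mp hB with rfl | hB2 <;>
            rcases Finset.mem_insert.mp hC with rfl | hC2
          · exact absurd rfl hne
          · rcases Finset.mem_union.mp hC2 with h' | h'
            · exact harcd C (Or.inl (hb1 C h'))
            · exact harcd C (Or.inr (hb2 C h'))
          · rcases Finset.mem_union.mp hB2 with h' | h'
            · exact (harcd B (Or.inl (hb1 B h'))).symm
            · exact (harcd B (Or.inr (hb2 B h'))).symm
          · rcases Finset.mem_union.mp hB2 with h1' | h1' <;>
              rcases Finset.mem_union.mp hC2 with h2' | h2'
            · exact hp1.2.1 B h1' C h2' hne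
            · rw [Finset.disjoint_left]; intro a haB haC
              have u1 := hb1 B h1' a haB; have u2 := hb2 C h2' a haC; omega
            · rw [Finset.disjoint_left]; intro a haB haC
              have u1 := hb2 B h1' a haB; have u2 := hb1 C h2' a haC; omega
            · exact hp2.2.1 B h1' C h2' hne
        · intro i₁ j₁ i₂ j₂ h1 h2 l1 l2 l3
          rcases Finset.mem_insert.mp h1 with he1 | h1'
          · have hu : i₁ ∈ ({i, m + 1} : Finset ℕ) := by rw [← he1]; simp
            have hv : j₁ ∈ ({i, m + 1} : Finset ℕ) := by rw [← he1]; simp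
            rw [Finset.mem_insert, Finset.mem_singleton] at hu hv
            rcases Finset.mem_insert.mp h2 with he2 | h2'
            · have hu2 : i₂ ∈ ({i, m + 1} : Finset ℕ) := by rw [← he2]; simp
              have hv2 : j₂ ∈ ({i, m + 1} : Finset ℕ) := by rw [← he2]; simp
              rw [Finset.mem_insert, Finset.mem_singleton] at hu2 hv2
              omega
            · rcases Finset.mem_union.mp h2' with h' | h'
              · have u1 := hb1 _ h' i₂ (by simp)
                have u2 := hb1 _ h' j₂ (by simp)
                omega
              · have u1 := hb2 _ h' i₂ (by simp)
                have u2 := hb2 _ h' j₂ (by simp)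
                omega
          · rcases Finset.mem_union.mp h1' with hx | hx
            · have hbi := hb1 _ hx i₁ (by simp)
              have hbj := hb1 _ hx j₁ (by simp)
              rcases Finset.mem_insert.mp h2 with he2 | h2'
              · have hu2 : i₂ ∈ ({i, m + 1} : Finset ℕ) := by rw [← he2]; simp
                rw [Finset.mem_insert, Finset.mem_singleton] at hu2
                omega
              · rcases Finset.mem_union.mp h2' with hy | hy
                · exact hp1.2.2 i₁ j₁ i₂ j₂ hx hy l1 l2 l3
                · have u1 := hb2 _ hy i₂ (by simp); omega
            · have hbi := hb2 _ hx i₁ (by simp)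
              have hbj := hb2 _ hx j₁ (by simp)
              rcases Finset.mem_insert.mp h2 with he2 | h2'
              · have hu2 : i₂ ∈ ({i, m + 1} : Finset ℕ) := by rw [← he2]; simp
                have hv2 : j₂ ∈ ({i, m + 1} : Finset ℕ) := by rw [← he2]; simp
                rw [Finset.mem_insert, Finset.mem_singleton] at hu2 hv2
                omega
              · rcases Finset.mem_union.mp h2' with hy | hy
                · have u1 := hb1 _ hy i₂ (by simp); omega
                · exact hp2.2.2 i₁ j₁ i₂ j₂ hx hy l1 l2 l3
      refine Finset.mem_filter.mpr ⟨mem_configsOn.mpr hcfg, ?_⟩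
      exact (cls_eq_succ_iff hi1 hi2 hcfg).mpr (Finset.mem_insert_self _ _)
  rw [key, Finset.card_product, hcard2]
  rfl

lemma F_rec (m : ℕ) :
    F (m + 1) = 2 * F m + ∑ j ∈ Finset.range m, F j * F (m - 1 - j) := by
  have hT : (ConfigsOn (Finset.Icc 1 (m + 1))).card
      = ∑ c ∈ Finset.range (m + 2),
        ((ConfigsOn (Finset.Icc 1 (m + 1))).filter (fun x => cls m x = c)).card :=
    Finset.card_eq_sum_card_fiberwise
      (fun x hx => Finset.mem_range.mpr (cls_lt (mem_configsOn.mp hx)))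
  show (ConfigsOn (Finset.Icc 1 (m + 1))).card = _
  rw [hT, Finset.sum_range_succ', Finset.sum_range_succ']
  have g0 : ((ConfigsOn (Finset.Icc 1 (m + 1))).filter (fun x => cls m x = 0)).card = F m := by
    rw [fiber_zero]; rfl
  have g1 : ((ConfigsOn (Finset.Icc 1 (m + 1))).filter (fun x => cls m x = 0 + 1)).card = F m :=
    card_fiber_one m
  have g2 : ∀ j ∈ Finset.range m,
      ((ConfigsOn (Finset.Icc 1 (m + 1))).filter (fun x => cls m x = j + 1 + 1)).card
        = F j * F (m - 1 - j) := by
    intro j hj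
    rw [Finset.mem_range] at hj
    have := card_fiber_arc m (j + 1) (by omega) (by omega)
    rw [this, Nat.add_sub_cancel]
    congr 2
    omega
  rw [g0, g1, Finset.sum_congr rfl g2]
  ring

lemma F_eq_catalan (m : ℕ) : F m = catalan (m + 1) := by
  induction m using Nat.strong_induction_on with
  | _ m ih =>
  match m with
  | 0 => rw [F_zero, catalan_one]
  | Nat.succ m =>
    rw [F_rec, ih m (by omega)]
    have hsum : ∑ j ∈ Finset.range m, F j * F (m - 1 - j)
        = ∑ j ∈ Finset.range m, catalan (j + 1) * catalan (m - j) := by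
      apply Finset.sum_congr rfl
      intro j hj
      rw [Finset.mem_range] at hj
      rw [ih j (by omega), ih (m - 1 - j) (by omega)]
      congr 2
      omega
    rw [hsum]
    have hc : catalan (m + 2) = ∑ i ∈ Finset.range (m + 2), catalan i * catalan (m + 1 - i) := by
      rw [catalan_succ]
      rw [← Finset.sum_range fun i => catalan i * catalan (m + 1 - i)]
    show _ = catalan (m + 2)
    rw [hc, Finset.sum_range_succ, Finset.sum_range_succ']
    have hre : ∀ j ∈ Finset.range m, catalan (j + 1) * catalan (m + 1 - (j + 1))
        = catalan (j + 1) * catalan (m - j) := by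
      intro j hj
      congr 2
      omega
    rw [Finset.sum_congr rfl hre]
    simp [catalan_zero]
    ring

theorem card_noncrossing_configs (n : ℕ) (hn : 1 ≤ n) :
    (Configs (n - 1)).card = catalan n := by
  have := F_eq_catalan (n - 1)
  rw [configs_eq]
  show F (n - 1) = catalan n
  rw [this]
  congr 1
  omega
end

section
/- For every positive integer n, the sum over Dyck paths π from (0,0) to (n,n) of q^{maj(σ(π))} equals the q-Catalan number (1/[n+1]_q)·qbinom(2n,n), where σ(π) is the 0/1 word of π (0 for north steps, 1 for east steps) and maj is the major index (sum of descent positions). -/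
open scoped Classical

noncomputable def qInt {K : Type*} [Field K] (q : K) (n : ℕ) : K :=
  ∑ i ∈ Finset.range n, q ^ i

noncomputable def qFact {K : Type*} [Field K] (q : K) (n : ℕ) : K :=
  ∏ i ∈ Finset.range n, qInt q (i + 1)

noncomputable def qBinom {K : Type*} [Field K] (q : K) (n k : ℕ) : K :=
  qFact q n / (qFact q k * qFact q (n - k))

noncomputable def qCat {K : Type*} [Field K] (q : K) (n : ℕ) : K :=
  qBinom q (2 * n) n / qInt q (n + 1)

def majF (n : ℕ) (w : Fin n → Bool) : ℕ :=
  ∑ i ∈ Finset.range n,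
    if h : i + 1 < n then
      (if w ⟨i, Nat.lt_of_succ_lt h⟩ = true ∧ w ⟨i + 1, h⟩ = false then i + 1 else 0)
    else 0

def IsDyckF (n : ℕ) (w : Fin (2 * n) → Bool) : Prop :=
  (Finset.univ.filter fun i => w i = true).card = n ∧
  ∀ k : ℕ, (Finset.univ.filter fun i : Fin (2 * n) => i.val < k ∧ w i = true).card ≤
      (Finset.univ.filter fun i : Fin (2 * n) => i.val < k ∧ w i = false).card

/-!
Call a word in `true`/`false` a ballot word if each of its prefixes contains at least as many
`false` as `true`, and let `B(m, b)` be the `maj`-generating function of ballot words of length `m`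
with `b` letters `true`. Deleting the last letter, and the one before it if the last letter is
`false`, gives `B(m + 2, b + 1) = B(m + 1, b + 1) + B(m + 1, b) + (q ^ (m + 1) - 1) B(m, b)` for
`2b < m`, and `B(2b + 2, b + 1) = B(2b + 1, b)` on the diagonal. These recursions are satisfied by
`qbinom(a + b, b) - q qbinom(a + b, b - 1)` (with `a = m - b`), which we use in the
denominator-free form `B(a + b, b) [a + 1]! [b]! = ([a + 1] - q [b]) [a + b]!`, valid for all `q`
in any field. At `a = b = n` the factor `[n + 1] - q [n]` is `1`, and for `q = X` the `q`-integers
are nonzero, which gives the `q`-Catalan number.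
-/

open Finset

section QAnalogues

variable {K : Type*} [Field K] (q : K)

theorem qInt_succ (k : ℕ) : qInt q (k + 1) = q * qInt q k + 1 := geom_sum_succ

theorem qInt_add (a b : ℕ) : qInt q (a + b) = qInt q a + q ^ a * qInt q b := by
  simp only [qInt, sum_range_add, pow_add, mul_sum]

theorem pow_eq_one_add_mul_qInt (k : ℕ) : q ^ k = 1 + (q - 1) * qInt q k := by
  rw [qInt, mul_geom_sum]; ring

theorem qFact_succ (k : ℕ) : qFact q (k + 1) = qFact q k * qInt q (k + 1) := prod_range_succ _ _

theorem qInt_two_mul_add_two (c : ℕ) :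
    (qInt q (c + 2) - q * qInt q c) * qInt q (c + 1) = qInt q (2 * c + 2) := by
  rw [show 2 * c + 2 = (c + 1) + (c + 1) by ring, qInt_add q (c + 1) (c + 1),
    pow_eq_one_add_mul_qInt q (c + 1), qInt_succ q (c + 1), qInt_succ q c]
  ring

theorem qInt_ballot_identity (a b : ℕ) :
    (qInt q (a + 1) - q * qInt q (b + 1)) * qInt q (a + b + 1) * qInt q (a + 2)
      + (qInt q (a + 2) - q * qInt q b) * qInt q (a + b + 1) * qInt q (b + 1)
      + (q ^ (a + b + 1) - 1) * (qInt q (a + 1) - q * qInt q b) * qInt q (a + 2) * qInt q (b + 1)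
      = (qInt q (a + 2) - q * qInt q (b + 1)) * qInt q (a + b + 1) * qInt q (a + b + 2) := by
  -- `q ^ k = 1 + (q - 1) * [k]` turns this into a polynomial identity in `q`, `[a + 1]`, `[b]`.
  have hsum : qInt q (a + b + 1) = qInt q (a + 1) + q ^ (a + 1) * qInt q b := by
    rw [← qInt_add]; ring_nf
  rw [qInt_succ q (a + b + 1), qInt_succ q (a + 1), qInt_succ q b, hsum,
    show q ^ (a + b + 1) = q ^ (a + 1) * q ^ b by ring,
    pow_eq_one_add_mul_qInt q (a + 1), pow_eq_one_add_mul_qInt q b]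
  ring

end QAnalogues

section BallotWords

def prefixCount {m : ℕ} (w : Fin m → Bool) (k : ℕ) (x : Bool) : ℕ :=
  #{i | i.val < k ∧ w i = x}

def IsBallot {m : ℕ} (w : Fin m → Bool) : Prop :=
  ∀ k, prefixCount w k true ≤ prefixCount w k false

noncomputable def ballotWords (m b : ℕ) : Finset (Fin m → Bool) :=
  {w | #{i | w i = true} = b ∧ IsBallot w}

theorem isDyckF_iff_mem_ballotWords {n : ℕ} (w : Fin (2 * n) → Bool) :
    IsDyckF n w ↔ w ∈ ballotWords (2 * n) n := by
  rw [ballotWords, mem_filter_univ]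
  rfl

variable {m : ℕ}

theorem prefixCount_snoc (v : Fin m → Bool) (x : Bool) (k : ℕ) (y : Bool) :
    prefixCount (Fin.snoc v x : Fin (m + 1) → Bool) k y
      = prefixCount v k y + if m < k ∧ x = y then 1 else 0 := by
  rw [prefixCount, prefixCount, card_filter, card_filter, Fin.sum_univ_castSucc]
  simp

theorem prefixCount_of_le (w : Fin m → Bool) {k : ℕ} (h : m ≤ k) (y : Bool) :
    prefixCount w k y = prefixCount w m y := by
  simp only [prefixCount]
  congr 1
  exact filter_congr fun i _ => by simp [i.isLt, i.isLt.trans_le h]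

theorem prefixCount_true_eq (w : Fin m → Bool) : prefixCount w m true = #{i | w i = true} := by
  simp [prefixCount]

theorem prefixCount_true_add_false (w : Fin m → Bool) :
    prefixCount w m true + prefixCount w m false = m := by
  simp only [prefixCount, Fin.is_lt, true_and]
  simpa using card_filter_add_card_filter_not (s := univ) (p := fun i : Fin m => w i = true)

theorem prefixCount_snoc_succ (v : Fin m → Bool) (x y : Bool) :
    prefixCount (Fin.snoc v x : Fin (m + 1) → Bool) (m + 1) y
      = prefixCount v m y + if x = y then 1 else 0 := by
  simp [prefixCount_snoc, prefixCount_of_le v m.le_succ]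

theorem isBallot_iff_forall_le (w : Fin m → Bool) :
    IsBallot w ↔ ∀ k ≤ m, prefixCount w k true ≤ prefixCount w k false := by
  refine ⟨fun h k _ => h k, fun h k => ?_⟩
  rcases le_total k m with hk | hk
  · exact h k hk
  · rw [prefixCount_of_le w hk, prefixCount_of_le w hk]
    exact h m le_rfl

theorem isBallot_snoc_iff (v : Fin m → Bool) (x : Bool) :
    IsBallot (Fin.snoc v x : Fin (m + 1) → Bool) ↔
      IsBallot v ∧
        2 * prefixCount (Fin.snoc v x : Fin (m + 1) → Bool) (m + 1) true ≤ m + 1 := by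
  have htotal := prefixCount_true_add_false (Fin.snoc v x : Fin (m + 1) → Bool)
  rw [isBallot_iff_forall_le, isBallot_iff_forall_le]
  constructor
  · intro h
    refine ⟨fun k hk => ?_, by have := h (m + 1) le_rfl; omega⟩
    simpa [prefixCount_snoc, hk.not_gt] using h k (by omega)
  · rintro ⟨hv, hlast⟩ k hk
    rcases hk.lt_or_eq with hk | rfl
    · simpa [prefixCount_snoc, Nat.lt_succ_iff.mp hk |>.not_gt] using hv k (by omega)
    · omega

theorem snoc_true_mem_ballotWords (v : Fin m → Bool) (b : ℕ) :
    Fin.snoc v true ∈ ballotWords (m + 1) (b + 1) ↔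
      v ∈ ballotWords m b ∧ 2 * (b + 1) ≤ m + 1 := by
  simp only [ballotWords, mem_filter_univ, ← prefixCount_true_eq, isBallot_snoc_iff,
    prefixCount_snoc_succ]
  grind

theorem snoc_false_mem_ballotWords (v : Fin m → Bool) (b : ℕ) :
    Fin.snoc v false ∈ ballotWords (m + 1) b ↔ v ∈ ballotWords m b ∧ 2 * b ≤ m + 1 := by
  simp only [ballotWords, mem_filter_univ, ← prefixCount_true_eq, isBallot_snoc_iff,
    prefixCount_snoc_succ]
  grind

theorem sum_ballotWords_succ {M : Type*} [AddCommMonoid M] {m c : ℕ} (h : 2 * (c + 1) ≤ m + 1)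
    (f : (Fin (m + 1) → Bool) → M) :
    ∑ w ∈ ballotWords (m + 1) (c + 1), f w
      = ∑ v ∈ ballotWords m (c + 1), f (Fin.snoc v false)
        + ∑ v ∈ ballotWords m c, f (Fin.snoc v true) := by
  have hsnoc (p : Bool × (Fin m → Bool)) : Fin.snocEquiv (fun _ => Bool) p = Fin.snoc p.2 p.1 :=
    rfl
  rw [← Fintype.sum_ite_mem, ← (Fin.snocEquiv fun _ => Bool).sum_comp, Fintype.sum_prod_type,
    Fintype.sum_bool, add_comm]
  simp only [hsnoc, snoc_false_mem_ballotWords, snoc_true_mem_ballotWords, h, and_true,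
    Fintype.sum_ite_mem]

theorem ballotWords_eq_empty {m b : ℕ} (h : m < 2 * b) : ballotWords m b = ∅ := by
  refine eq_empty_of_forall_notMem fun w hw => ?_
  rw [ballotWords, mem_filter_univ, ← prefixCount_true_eq] at hw
  have := hw.2 m
  have := prefixCount_true_add_false w
  omega

theorem ballotWords_zero_right (m : ℕ) : ballotWords m 0 = {fun _ => false} := by
  ext w
  simp only [ballotWords, mem_filter_univ, mem_singleton, card_eq_zero, filter_eq_empty_iff,
    mem_univ, true_implies, Bool.not_eq_true]
  constructor
  · exact fun h => funext h.1
  · rintro rfl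
    exact ⟨fun _ => rfl, fun k => by simp [prefixCount]⟩

end BallotWords

section MajorIndex

variable {m : ℕ}

theorem majF_succ (w : Fin (m + 1) → Bool) :
    majF (m + 1) w
      = ∑ i : Fin m, if w i.castSucc = true ∧ w i.succ = false then (i : ℕ) + 1 else 0 := by
  rw [majF, sum_range_succ, dif_neg (by omega), add_zero, ← Fin.sum_univ_eq_sum_range]
  exact sum_congr rfl fun i _ => dif_pos (by omega)

theorem majF_snoc (v : Fin (m + 1) → Bool) (x : Bool) :
    majF (m + 2) (Fin.snoc v x)
      = majF (m + 1) v + if v (Fin.last m) = true ∧ x = false then m + 1 else 0 := by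
  rw [majF_succ, majF_succ, Fin.sum_univ_castSucc]
  simp only [Fin.succ_castSucc, Fin.snoc_castSucc, Fin.succ_last, Fin.snoc_last,
    Fin.val_castSucc, Fin.val_last]

theorem majF_snoc_true (v : Fin m → Bool) : majF (m + 1) (Fin.snoc v true) = majF m v := by
  cases m with
  | zero => simp [majF]
  | succ m => simp [majF_snoc]

end MajorIndex

section BallotMajSum

variable {K : Type*} [Field K] (q : K)

noncomputable def ballotMajSum (m b : ℕ) : K :=
  ∑ w ∈ ballotWords m b, q ^ majF m w

theorem ballotMajSum_zero_right (m : ℕ) : ballotMajSum q m 0 = 1 := by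
  simp [ballotMajSum, ballotWords_zero_right, majF]

theorem ballotMajSum_succ {m c : ℕ} (h : 2 * (c + 1) ≤ m + 1) :
    ballotMajSum q (m + 1) (c + 1)
      = ∑ v ∈ ballotWords m (c + 1), q ^ majF (m + 1) (Fin.snoc v false)
        + ballotMajSum q m c := by
  simp only [ballotMajSum, sum_ballotWords_succ h, majF_snoc_true]

theorem ballotMajSum_succ_succ {m c : ℕ} (h : 2 * (c + 1) ≤ m + 1) :
    ballotMajSum q (m + 2) (c + 1) = ballotMajSum q (m + 1) (c + 1) + ballotMajSum q (m + 1) c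
      + (q ^ (m + 1) - 1) * ballotMajSum q m c := by
  have hlast : ∑ v ∈ ballotWords (m + 1) (c + 1), q ^ majF (m + 2) (Fin.snoc v false)
      = ∑ v ∈ ballotWords m (c + 1), q ^ majF (m + 1) (Fin.snoc v false)
        + q ^ (m + 1) * ballotMajSum q m c := by
    simp [sum_ballotWords_succ h, majF_snoc, majF_snoc_true, pow_add, ballotMajSum, mul_sum,
      mul_comm]
  rw [ballotMajSum_succ q (by omega), hlast, ballotMajSum_succ q h]
  ring

theorem ballotMajSum_two_mul_add_two (c : ℕ) :
    ballotMajSum q (2 * c + 2) (c + 1) = ballotMajSum q (2 * c + 1) c := by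
  rw [ballotMajSum_succ q (by omega), ballotWords_eq_empty (by omega), sum_empty, zero_add]

theorem ballotMajSum_mul_qFact {a b : ℕ} (hba : b ≤ a) :
    ballotMajSum q (a + b) b * (qFact q (a + 1) * qFact q b)
      = (qInt q (a + 1) - q * qInt q b) * qFact q (a + b) := by
  induction b generalizing a with
  | zero =>
    rw [ballotMajSum_zero_right, qFact_succ, add_zero, show qFact q 0 = 1 from prod_range_zero _,
      show qInt q 0 = 0 from sum_range_zero _]
    ring
  | succ c ih =>
    induction a, hba using Nat.le_induction with
    | base =>
      have h := ih (a := c + 1) (by omega)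
      rw [show c + 1 + (c + 1) = 2 * c + 2 by ring, ballotMajSum_two_mul_add_two,
        show 2 * c + 1 = c + 1 + c by ring, qFact_succ q c, show 2 * c + 2 = c + 1 + c + 1 by ring,
        qFact_succ q (c + 1 + c)]
      have hdiag := qInt_two_mul_add_two q c
      rw [show 2 * c + 2 = c + 1 + c + 1 by ring] at hdiag
      linear_combination qInt q (c + 1) * h + qFact q (c + 1 + c) * hdiag
        - qFact q (c + 1 + c) * qInt q (c + 1 + c + 1) * qInt_succ q (c + 1)
    | succ a hca ih' =>
      have h₁ : ballotMajSum q (a + c + 1) c * (qFact q (a + 2) * qFact q c)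
          = (qInt q (a + 2) - q * qInt q c) * qFact q (a + c + 1) := by
        have := ih (a := a + 1) (by omega)
        rwa [show a + 1 + c = a + c + 1 by ring] at this
      have h₂ := ih (a := a) (by omega)
      rw [show a + (c + 1) = a + c + 1 by ring] at ih'
      rw [show a + 1 + (c + 1) = a + c + 2 by ring, ballotMajSum_succ_succ q (by omega),
        qFact_succ q (a + 1), qFact_succ q c, show a + c + 2 = a + c + 1 + 1 by ring,
        qFact_succ q (a + c + 1), qFact_succ q (a + c)]
      rw [qFact_succ q c, qFact_succ q (a + c)] at ih'
      rw [qFact_succ q (a + 1), qFact_succ q (a + c)] at h₁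
      linear_combination qInt q (a + 2) * ih' + qInt q (c + 1) * h₁
        + (q ^ (a + c + 1) - 1) * qInt q (a + 2) * qInt q (c + 1) * h₂
        + qFact q (a + c) * qInt_ballot_identity q a c

end BallotMajSum

theorem qInt_X_succ_ne_zero {K : Type*} [Field K] [CharZero K] (k : ℕ) :
    qInt (RatFunc.X : RatFunc K) (k + 1) ≠ 0 := by
  intro h
  have hpoly : ∑ i ∈ range (k + 1), (Polynomial.X : Polynomial K) ^ i = 0 := by
    apply RatFunc.algebraMap_injective K
    simpa [qInt, RatFunc.algebraMap_X] using h
  have hk : (k : K) + 1 = 0 := by simpa using congrArg (Polynomial.eval 1) hpoly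
  exact_mod_cast hk

theorem maj_gen_fun_dyck_general (n : ℕ) :
    ∑ w ∈ Finset.univ.filter (IsDyckF n), (RatFunc.X : RatFunc ℚ) ^ majF (2 * n) w
      = qCat (RatFunc.X : RatFunc ℚ) n := by
  set q : RatFunc ℚ := RatFunc.X
  have hdyck : Finset.univ.filter (IsDyckF n) = ballotWords (2 * n) n := by
    ext w
    rw [mem_filter_univ, isDyckF_iff_mem_ballotWords]
  have hclosed := ballotMajSum_mul_qFact q (le_refl n)
  have hfact : qFact q n ≠ 0 := prod_ne_zero_iff.2 fun i _ => qInt_X_succ_ne_zero i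
  rw [qFact_succ] at hclosed
  rw [hdyck, ← ballotMajSum, qCat, qBinom, two_mul, Nat.add_sub_cancel, div_div,
    eq_div_iff (mul_ne_zero (mul_ne_zero hfact hfact) (qInt_X_succ_ne_zero n))]
  linear_combination hclosed + qFact q (n + n) * qInt_succ q n

theorem maj_gen_fun_dyck (n : ℕ) (hn : 1 ≤ n) :
    ∑ w ∈ Finset.univ.filter (IsDyckF n), (RatFunc.X : RatFunc ℚ) ^ majF (2 * n) w
      = qCat (RatFunc.X : RatFunc ℚ) n :=
  maj_gen_fun_dyck_general n
end

section
/- There is a bijection between the set X_n of noncrossing (1,2)-configurations of [n-1] and the set of Dyck paths from (0,0) to (n,n). -/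
open scoped Classical

/-!
Read a configuration on `[m]` as a bicoloured Motzkin path of length `m`: the smaller element of a
pair is an up step, the larger one a down step, a singleton is a level step of one colour and an
uncovered point a level step of the other colour. Noncrossing means the pairs are matched like
parentheses, so they can be read back from the path: the down step `j` is paired with the last up
step before `j` that ends at the height from which `j` descends (`partner`). Replacing up, down,
first and second colour level steps by `UU`, `DD`, `UD`, `DU` and adding a `U` in front and a `D`
at the end turns such paths into the Dyck paths of semilength `m + 1`; reading the letters in
pairs undoes this.
-/

open Finset

namespace NoncrossingConfig

def countLE (X : Finset ℕ) (i : ℕ) : ℕ := #{a ∈ X | a ≤ i}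

lemma zero_notMem_of_subset_Icc {X : Finset ℕ} {m : ℕ} (hX : X ⊆ Icc 1 m) : 0 ∉ X :=
  fun h ↦ by simpa using hX h

lemma countLE_zero {X : Finset ℕ} (h : 0 ∉ X) : countLE X 0 = 0 := by
  simp only [countLE, card_eq_zero, filter_eq_empty_iff, nonpos_iff_eq_zero]
  rintro a ha rfl
  exact h ha

lemma countLE_add_card_Ioc (X : Finset ℕ) {a b : ℕ} (hab : a ≤ b) :
    countLE X a + #{t ∈ X | a < t ∧ t ≤ b} = countLE X b := by
  rw [countLE, countLE, ← card_union_of_disjoint (disjoint_filter.2 fun _ _ h ↦ by omega),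
    ← filter_or]
  congr 1
  exact filter_congr fun t _ ↦ by omega

lemma countLE_succ (X : Finset ℕ) (i : ℕ) :
    countLE X (i + 1) = countLE X i + if i + 1 ∈ X then 1 else 0 := by
  rw [← countLE_add_card_Ioc X (Nat.le_succ i)]
  congr 1
  rw [filter_congr (q := (i + 1 = ·)) fun t _ ↦ by omega, filter_eq]
  split_ifs <;> simp

lemma countLE_of_subset_Icc {X : Finset ℕ} {m i : ℕ} (hX : X ⊆ Icc 1 m) (hi : m ≤ i) :
    countLE X i = #X := by
  rw [countLE, filter_true_of_mem fun a ha ↦ (mem_Icc.1 (hX ha)).2.trans hi]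

lemma countLE_min_of_subset_Icc {X : Finset ℕ} {m i : ℕ} (hX : X ⊆ Icc 1 m) :
    countLE X (min i m) = countLE X i := by
  rcases le_total i m with hi | hi
  · rw [min_eq_left hi]
  · rw [min_eq_right hi, countLE_of_subset_Icc hX le_rfl, countLE_of_subset_Icc hX hi]

def height (O C : Finset ℕ) (i : ℕ) : ℤ := countLE O i - countLE C i

lemma height_succ (O C : Finset ℕ) (i : ℕ) :
    height O C (i + 1) =
      height O C i + (if i + 1 ∈ O then 1 else 0) - (if i + 1 ∈ C then 1 else 0) := by
  simp only [height, countLE_succ]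
  push_cast
  ring

lemma height_succ_le (O C : Finset ℕ) (i : ℕ) : height O C (i + 1) ≤ height O C i + 1 := by
  rw [height_succ]
  split_ifs <;> omega

lemma mem_of_height_lt_succ {O C : Finset ℕ} {i : ℕ}
    (h : height O C i < height O C (i + 1)) : i + 1 ∈ O := by
  rw [height_succ] at h
  by_contra hi
  simp only [hi, if_false] at h
  split_ifs at h <;> omega

lemma exists_first_eq_of_le_succ {f : ℕ → ℤ} (hf : ∀ k, f (k + 1) ≤ f k + 1) {a b : ℕ}
    {v : ℤ} (hab : a ≤ b) (ha : f a < v) (hb : v ≤ f b) :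
    ∃ t, a < t ∧ t ≤ b ∧ f t = v ∧ ∀ u, a ≤ u → u < t → f u < v := by
  have hex : ∃ t, a ≤ t ∧ v ≤ f t := ⟨b, hab, hb⟩
  obtain ⟨hat, hvt⟩ := Nat.find_spec hex
  have hbefore : ∀ u, a ≤ u → u < Nat.find hex → f u < v := fun u hau hut ↦
    lt_of_not_ge fun h ↦ Nat.find_min hex hut ⟨hau, h⟩
  have hat' : a < Nat.find hex := lt_of_le_of_ne hat fun h ↦ (h ▸ ha).not_ge hvt
  refine ⟨Nat.find hex, hat', Nat.find_min' hex ⟨hab, hb⟩, le_antisymm ?_ hvt, hbefore⟩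
  have hstep := hf (Nat.find hex - 1)
  rw [Nat.sub_add_cancel (by omega)] at hstep
  have := hbefore (Nat.find hex - 1) (by omega) (by omega)
  omega

lemma exists_mem_height_eq {O C : Finset ℕ} {k l : ℕ} (hkl : k ≤ l)
    (hlt : height O C k < height O C l) :
    ∃ t, k < t ∧ t ≤ l ∧ t ∈ O ∧ height O C t = height O C l := by
  obtain ⟨t, hkt, htl, heq, hbefore⟩ :=
    exists_first_eq_of_le_succ (height_succ_le O C) hkl hlt le_rfl
  obtain ⟨s, rfl⟩ := Nat.exists_eq_add_of_lt hkt
  have hstep := hbefore (k + s) (by omega) (by omega)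
  exact ⟨_, hkt, htl, mem_of_height_lt_succ (by rwa [heq]), heq⟩

def partner (O C : Finset ℕ) (j : ℕ) : ℕ :=
  Nat.findGreatest (fun i ↦ i ∈ O ∧ height O C i = height O C (j - 1)) (j - 1)

lemma le_partner {O C : Finset ℕ} {j a : ℕ} (ha : a ∈ O) (haj : a < j)
    (heq : height O C a = height O C (j - 1)) : a ≤ partner O C j :=
  Nat.le_findGreatest (by omega) ⟨ha, heq⟩

lemma height_pred_le_of_partner_le {O C : Finset ℕ} {j k : ℕ} (hpk : partner O C j ≤ k)
    (hkj : k < j) : height O C (j - 1) ≤ height O C k := by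
  by_contra! hlt
  obtain ⟨t, hkt, htj, htO, hteq⟩ := exists_mem_height_eq (show k ≤ j - 1 by omega) hlt
  have := le_partner htO (by omega) hteq
  omega

section Partner

variable {O C : Finset ℕ} (h0 : 0 ∉ O) (hOC : Disjoint O C)
  (hbal : ∀ i, countLE C i ≤ countLE O i)
include h0 hbal

omit h0 in
lemma height_nonneg (i : ℕ) : 0 ≤ height O C i := by
  have := hbal i
  simp only [height]
  omega

lemma height_zero : height O C 0 = 0 := by
  have := hbal 0
  simp only [height, countLE_zero h0] at this ⊢
  omega

lemma one_le_of_mem_down {j : ℕ} (hj : j ∈ C) : 1 ≤ j := by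
  refine Nat.one_le_iff_ne_zero.2 fun h ↦ ?_
  have := hbal 0
  rw [countLE_zero h0, Nat.le_zero, countLE, card_eq_zero, filter_eq_empty_iff] at this
  exact this hj (by omega)

include hOC

lemma height_pred_of_mem_down {j : ℕ} (hj : j ∈ C) : height O C (j - 1) = height O C j + 1 := by
  have hj1 := one_le_of_mem_down h0 hbal hj
  have hjO : j ∉ O := disjoint_right.1 hOC hj
  have := height_succ O C (j - 1)
  rw [Nat.sub_add_cancel hj1] at this
  simp only [hj, hjO, if_true, if_false] at this
  omega

lemma partner_spec {j : ℕ} (hj : j ∈ C) :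
    partner O C j ∈ O ∧ partner O C j < j ∧
      height O C (partner O C j) = height O C (j - 1) := by
  have hj1 := one_le_of_mem_down h0 hbal hj
  have hpos : height O C 0 < height O C (j - 1) := by
    rw [height_zero h0 hbal, height_pred_of_mem_down h0 hOC hbal hj]
    linarith [height_nonneg hbal j]
  obtain ⟨t, -, htj, htO, hteq⟩ := exists_mem_height_eq (Nat.zero_le _) hpos
  obtain ⟨hO, heq⟩ : partner O C j ∈ O ∧ height O C (partner O C j) = height O C (j - 1) :=
    Nat.findGreatest_spec (P := fun i ↦ i ∈ O ∧ height O C i = height O C (j - 1))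
      (show t ≤ j - 1 by omega) ⟨htO, hteq⟩
  have hle : partner O C j ≤ j - 1 := Nat.findGreatest_le _
  exact ⟨hO, by omega, heq⟩

lemma partner_eq_of {i j : ℕ} (hj : j ∈ C) (hi : i ∈ O) (hij : i < j)
    (heq : height O C i = height O C (j - 1))
    (hle : ∀ k, i ≤ k → k < j → height O C i ≤ height O C k) : partner O C j = i := by
  obtain ⟨hpO, hpj, hpeq⟩ := partner_spec h0 hOC hbal hj
  refine le_antisymm ?_ (le_partner hi hij heq)
  by_contra! hip
  have h1 := hle (partner O C j - 1) (by omega) (by omega)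
  have h2 := height_succ O C (partner O C j - 1)
  rw [Nat.sub_add_cancel (by omega)] at h2
  simp only [hpO, disjoint_left.1 hOC hpO, if_true, if_false] at h2
  omega

lemma partner_injOn : Set.InjOn (partner O C) C := by
  intro j₁ hj₁ j₂ hj₂ heq
  by_contra hne
  wlog hlt : j₁ < j₂ generalizing j₁ j₂
  · exact this hj₂ hj₁ heq.symm (Ne.symm hne) (by omega)
  obtain ⟨-, hp₁, hh₁⟩ := partner_spec h0 hOC hbal hj₁
  obtain ⟨-, -, hh₂⟩ := partner_spec h0 hOC hbal hj₂
  have := height_pred_le_of_partner_le (heq ▸ hp₁.le) hlt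
  have := height_pred_of_mem_down h0 hOC hbal hj₁
  rw [← heq] at hh₂
  omega

lemma not_partner_lt_partner_lt_lt {j₁ j₂ : ℕ} (hj₂ : j₂ ∈ C)
    (h₁ : partner O C j₁ < partner O C j₂) (h₂ : partner O C j₂ < j₁)
    (h₃ : j₁ < j₂) : False := by
  obtain ⟨hp₂O, -, hh₂⟩ := partner_spec h0 hOC hbal hj₂
  have := height_pred_le_of_partner_le
    (show partner O C j₂ ≤ j₁ - 1 by omega) (show j₁ - 1 < j₂ by omega)
  have := height_pred_le_of_partner_le (k := partner O C j₂) h₁.le h₂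
  have := le_partner (C := C) hp₂O h₂ (by omega)
  omega

end Partner

lemma pair_eq_pair_of_lt {α : Type*} [LinearOrder α] {a b c d : α}
    (h : ({a, b} : Finset α) = {c, d}) (hab : a < b) (hcd : c < d) : a = c ∧ b = d := by
  rcases Set.pair_eq_pair_iff.1 (by rw [← coe_pair, ← coe_pair, h] : ({a, b} : Set α) = {c, d})
    with h' | ⟨rfl, rfl⟩
  · exact h'
  · exact (lt_asymm hab hcd).elim

def IsArc (x : Finset (Finset ℕ)) (a b : ℕ) : Prop := a < b ∧ {a, b} ∈ x

noncomputable def openers (m : ℕ) (x : Finset (Finset ℕ)) : Finset ℕ :=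
  {a ∈ Icc 1 m | ∃ b, IsArc x a b}

noncomputable def closers (m : ℕ) (x : Finset (Finset ℕ)) : Finset ℕ :=
  {b ∈ Icc 1 m | ∃ a, IsArc x a b}

noncomputable def singletons (m : ℕ) (x : Finset (Finset ℕ)) : Finset ℕ :=
  {a ∈ Icc 1 m | {a} ∈ x}

section Config

variable {m : ℕ} {x : Finset (Finset ℕ)} (hx : IsConfig m x)
include hx

lemma eq_of_mem_of_mem {B B' : Finset ℕ} (hB : B ∈ x) (hB' : B' ∈ x) {a : ℕ} (ha : a ∈ B)
    (ha' : a ∈ B') : B = B' := by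
  by_contra hne
  exact disjoint_left.1 (hx.2.1 B hB B' hB' hne) ha ha'

lemma IsArc.right_unique {a b b' : ℕ} (h : IsArc x a b) (h' : IsArc x a b') : b = b' :=
  (pair_eq_pair_of_lt (eq_of_mem_of_mem hx h.2 h'.2 (mem_insert_self a _) (mem_insert_self a _))
    h.1 h'.1).2

lemma IsArc.left_unique {a a' b : ℕ} (h : IsArc x a b) (h' : IsArc x a' b) : a = a' :=
  (pair_eq_pair_of_lt (eq_of_mem_of_mem hx h.2 h'.2 (mem_insert_of_mem (mem_singleton_self b))
    (mem_insert_of_mem (mem_singleton_self b))) h.1 h'.1).1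

lemma IsArc.mem_openers {a b : ℕ} (h : IsArc x a b) : a ∈ openers m x :=
  mem_filter.2 ⟨(hx.1 _ h.2).1 (mem_insert_self a _), b, h⟩

lemma IsArc.mem_closers {a b : ℕ} (h : IsArc x a b) : b ∈ closers m x :=
  mem_filter.2 ⟨(hx.1 _ h.2).1 (mem_insert_of_mem (mem_singleton_self b)), a, h⟩

lemma disjoint_openers_closers : Disjoint (openers m x) (closers m x) := by
  refine disjoint_left.2 fun a ha hc ↦ ?_
  obtain ⟨-, b, hab⟩ := mem_filter.1 ha
  obtain ⟨-, c, hca⟩ := mem_filter.1 hc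
  have heq := eq_of_mem_of_mem hx hab.2 hca.2 (mem_insert_self a _)
    (mem_insert_of_mem (mem_singleton_self a))
  have := (pair_eq_pair_of_lt heq hab.1 hca.1).1
  have := hca.1
  omega

lemma disjoint_openers_singletons : Disjoint (openers m x) (singletons m x) := by
  refine disjoint_left.2 fun a ha hs ↦ ?_
  obtain ⟨-, b, hab⟩ := mem_filter.1 ha
  have heq := eq_of_mem_of_mem hx hab.2 (mem_filter.1 hs).2 (mem_insert_self a _)
    (mem_singleton_self a)
  have hb : b ∈ ({a} : Finset ℕ) := heq ▸ mem_insert_of_mem (mem_singleton_self b)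
  exact hab.1.ne (mem_singleton.1 hb).symm

lemma disjoint_closers_singletons : Disjoint (closers m x) (singletons m x) := by
  refine disjoint_left.2 fun b hc hs ↦ ?_
  obtain ⟨-, a, hab⟩ := mem_filter.1 hc
  have heq := eq_of_mem_of_mem hx hab.2 (mem_filter.1 hs).2
    (mem_insert_of_mem (mem_singleton_self b)) (mem_singleton_self b)
  have ha : a ∈ ({b} : Finset ℕ) := heq ▸ mem_insert_self a _
  exact hab.1.ne (mem_singleton.1 ha)

lemma IsArc.right_lt_of_lt_left {i j a b : ℕ} (hij : IsArc x i j) (hab : IsArc x a b)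
    (hia : i < a) (haj : a < j) : b < j := by
  rcases lt_trichotomy b j with hbj | rfl | hjb
  · exact hbj
  · exact absurd (hab.left_unique hx hij) (by omega)
  · exact (hx.2.2 i j a b hij.2 hab.2 hia haj hjb).elim

lemma IsArc.lt_left_of_lt_right {i j a b : ℕ} (hij : IsArc x i j) (hab : IsArc x a b)
    (hib : i < b) (hbj : b < j) : i < a := by
  rcases lt_trichotomy a i with hai | rfl | hia
  · exact (hx.2.2 a b i j hab.2 hij.2 hai (by omega) hbj).elim
  · exact absurd (hab.right_unique hx hij) (by omega)
  · exact hia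

lemma card_le_card_of_forall_isArc_left {s t : Finset ℕ}
    (h : ∀ b ∈ s, ∃ a ∈ t, IsArc x a b) : #s ≤ #t :=
  card_le_card_of_forall_subsingleton (fun b a ↦ IsArc x a b) h
    fun _ _ _ h₁ _ h₂ ↦ h₁.2.right_unique hx h₂.2

lemma card_le_card_of_forall_isArc_right {s t : Finset ℕ}
    (h : ∀ a ∈ s, ∃ b ∈ t, IsArc x a b) : #s ≤ #t :=
  card_le_card_of_forall_subsingleton (IsArc x) h
    fun _ _ _ h₁ _ h₂ ↦ h₁.2.left_unique hx h₂.2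

lemma countLE_closers_le_openers (k : ℕ) :
    countLE (closers m x) k ≤ countLE (openers m x) k := by
  refine card_le_card_of_forall_isArc_left hx fun b hb ↦ ?_
  obtain ⟨hbC, hbk⟩ := mem_filter.1 hb
  obtain ⟨-, a, hab⟩ := mem_filter.1 hbC
  exact ⟨a, mem_filter.2 ⟨hab.mem_openers hx, by have := hab.1; omega⟩, hab⟩

lemma card_openers_eq_card_closers : #(openers m x) = #(closers m x) := by
  refine le_antisymm (card_le_card_of_forall_isArc_right hx fun a ha ↦ ?_)
    (card_le_card_of_forall_isArc_left hx fun b hb ↦ ?_)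
  · obtain ⟨-, b, hab⟩ := mem_filter.1 ha
    exact ⟨b, hab.mem_closers hx, hab⟩
  · obtain ⟨-, a, hab⟩ := mem_filter.1 hb
    exact ⟨a, hab.mem_openers hx, hab⟩

lemma IsArc.height_le {i j k : ℕ} (hij : IsArc x i j) (hik : i ≤ k) (hkj : k < j) :
    height (openers m x) (closers m x) i ≤ height (openers m x) (closers m x) k := by
  have hO := countLE_add_card_Ioc (openers m x) hik
  have hC := countLE_add_card_Ioc (closers m x) hik
  have hcard :
      #{t ∈ closers m x | i < t ∧ t ≤ k} ≤ #{t ∈ openers m x | i < t ∧ t ≤ k} := by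
    refine card_le_card_of_forall_isArc_left hx fun b hb ↦ ?_
    obtain ⟨hbC, hib, hbk⟩ := mem_filter.1 hb
    obtain ⟨-, a, hab⟩ := mem_filter.1 hbC
    have := hij.lt_left_of_lt_right hx hab hib (by omega)
    exact ⟨a, mem_filter.2 ⟨hab.mem_openers hx, this, by have := hab.1; omega⟩, hab⟩
  simp only [height]
  omega

lemma IsArc.height_pred_eq {i j : ℕ} (hij : IsArc x i j) :
    height (openers m x) (closers m x) (j - 1) = height (openers m x) (closers m x) i := by
  have hlt := hij.1
  have hO := countLE_add_card_Ioc (openers m x) (show i ≤ j - 1 by omega)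
  have hC := countLE_add_card_Ioc (closers m x) (show i ≤ j - 1 by omega)
  have hcard : #{t ∈ openers m x | i < t ∧ t ≤ j - 1} ≤
      #{t ∈ closers m x | i < t ∧ t ≤ j - 1} := by
    refine card_le_card_of_forall_isArc_right hx fun a ha ↦ ?_
    obtain ⟨haO, hia, haj⟩ := mem_filter.1 ha
    obtain ⟨-, b, hab⟩ := mem_filter.1 haO
    have := hij.right_lt_of_lt_left hx hab hia (by omega)
    exact ⟨b, mem_filter.2 ⟨hab.mem_closers hx, by have := hab.1; omega, by omega⟩, hab⟩
  have := hij.height_le hx (show i ≤ j - 1 by omega) (by omega)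
  simp only [height] at this ⊢
  omega

lemma IsArc.partner_eq {i j : ℕ} (hij : IsArc x i j) :
    partner (openers m x) (closers m x) j = i := by
  refine partner_eq_of (zero_notMem_of_subset_Icc (filter_subset _ _))
    (disjoint_openers_closers hx) (countLE_closers_le_openers hx)
    (hij.mem_closers hx) (hij.mem_openers hx) hij.1 (hij.height_pred_eq hx).symm
    fun k hik hkj ↦ hij.height_le hx hik hkj

end Config

noncomputable def configOf (O C S : Finset ℕ) : Finset (Finset ℕ) :=
  S.image (fun s ↦ {s}) ∪ C.image (fun j ↦ {partner O C j, j})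

lemma mem_configOf {O C S B : Finset ℕ} :
    B ∈ configOf O C S ↔ (∃ s ∈ S, {s} = B) ∨ ∃ j ∈ C, {partner O C j, j} = B := by
  simp only [configOf, mem_union, mem_image]

section ConfigOf

variable {m : ℕ} {O C S : Finset ℕ}
  (hO : O ⊆ Icc 1 m) (hC : C ⊆ Icc 1 m) (hS : S ⊆ Icc 1 m)
  (hOC : Disjoint O C) (hOS : Disjoint O S) (hCS : Disjoint C S)
  (hbal : ∀ i, countLE C i ≤ countLE O i)

include hO hOC hbal

lemma isArc_configOf_iff {a b : ℕ} :
    IsArc (configOf O C S) a b ↔ b ∈ C ∧ partner O C b = a := by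
  have h0 := zero_notMem_of_subset_Icc hO
  constructor
  · rintro ⟨hab, hmem⟩
    rcases mem_configOf.1 hmem with ⟨s, -, hs⟩ | ⟨j, hj, hpj⟩
    · have ha : a ∈ ({s} : Finset ℕ) := hs ▸ mem_insert_self a _
      have hb : b ∈ ({s} : Finset ℕ) := hs ▸ mem_insert_of_mem (mem_singleton_self b)
      rw [mem_singleton] at ha hb
      omega
    · obtain ⟨rfl, rfl⟩ := pair_eq_pair_of_lt hpj (partner_spec h0 hOC hbal hj).2.1 hab
      exact ⟨hj, rfl⟩
  · rintro ⟨hb, rfl⟩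
    exact ⟨(partner_spec h0 hOC hbal hb).2.1, mem_configOf.2 (Or.inr ⟨b, hb, rfl⟩)⟩

include hC in
lemma closers_configOf : closers m (configOf O C S) = C := by
  ext b
  simp only [closers, mem_filter, isArc_configOf_iff hO hOC hbal]
  exact ⟨fun ⟨_, _, hb, _⟩ ↦ hb, fun hb ↦ ⟨hC hb, _, hb, rfl⟩⟩

lemma openers_configOf (hcard : #O = #C) : openers m (configOf O C S) = O := by
  have h0 := zero_notMem_of_subset_Icc hO
  have himage : C.image (partner O C) = O :=
    eq_of_subset_of_card_le (image_subset_iff.2 fun j hj ↦ (partner_spec h0 hOC hbal hj).1)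
      (by rw [card_image_of_injOn (partner_injOn h0 hOC hbal), hcard])
  ext a
  simp only [openers, mem_filter, isArc_configOf_iff hO hOC hbal]
  constructor
  · rintro ⟨-, b, hb, rfl⟩
    exact (partner_spec h0 hOC hbal hb).1
  · intro ha
    obtain ⟨b, hb, hba⟩ := mem_image.1 (himage ▸ ha)
    exact ⟨hO ha, b, hb, hba⟩

include hS in
lemma singletons_configOf : singletons m (configOf O C S) = S := by
  have h0 := zero_notMem_of_subset_Icc hO
  ext a
  simp only [singletons, mem_filter, mem_configOf]
  constructor
  · rintro ⟨-, ⟨s, hs, hsa⟩ | ⟨j, hj, hja⟩⟩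
    · rwa [singleton_inj.1 hsa.symm]
    · have := card_pair (partner_spec h0 hOC hbal hj).2.1.ne
      rw [hja, card_singleton] at this
      omega
  · exact fun ha ↦ ⟨hS ha, Or.inl ⟨a, ha, rfl⟩⟩

include hOS hCS in
lemma eq_of_mem_configOf {B B' : Finset ℕ} (hB : B ∈ configOf O C S)
    (hB' : B' ∈ configOf O C S) {a : ℕ} (ha : a ∈ B) (ha' : a ∈ B') : B = B' := by
  have hspec := fun {j} (hj : j ∈ C) ↦ partner_spec (zero_notMem_of_subset_Icc hO) hOC hbal hj
  rcases mem_configOf.1 hB with ⟨s, hs, rfl⟩ | ⟨j, hj, rfl⟩ <;>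
    rcases mem_configOf.1 hB' with ⟨s', hs', rfl⟩ | ⟨j', hj', rfl⟩ <;>
    simp only [mem_insert, mem_singleton] at ha ha'
  · rw [← ha, ← ha']
  · rcases ha' with rfl | rfl
    · exact (disjoint_left.1 hOS (hspec hj').1 (ha ▸ hs)).elim
    · exact (disjoint_left.1 hCS hj' (ha ▸ hs)).elim
  · rcases ha with rfl | rfl
    · exact (disjoint_left.1 hOS (hspec hj).1 (ha' ▸ hs')).elim
    · exact (disjoint_left.1 hCS hj (ha' ▸ hs')).elim
  · rcases ha with rfl | rfl <;> rcases ha' with h | rfl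
    · rw [partner_injOn (zero_notMem_of_subset_Icc hO) hOC hbal hj hj' h]
    · exact (disjoint_left.1 hOC (hspec hj).1 hj').elim
    · exact (disjoint_left.1 hOC (h ▸ (hspec hj').1) hj).elim
    · rfl

include hC hS hOS hCS in
lemma isConfig_configOf : IsConfig m (configOf O C S) := by
  have h0 := zero_notMem_of_subset_Icc hO
  refine ⟨fun B hB ↦ ?_, fun B hB B' hB' hne ↦ disjoint_left.2 fun a ha ha' ↦
    hne (eq_of_mem_configOf hO hOC hOS hCS hbal hB hB' ha ha'),
    fun i₁ j₁ i₂ j₂ h₁ h₂ h12 h21 h22 ↦ ?_⟩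
  · rcases mem_configOf.1 hB with ⟨s, hs, rfl⟩ | ⟨j, hj, rfl⟩
    · exact ⟨singleton_subset_iff.2 (hS hs), Or.inl (card_singleton s)⟩
    · obtain ⟨hpO, hpj, -⟩ := partner_spec h0 hOC hbal hj
      exact ⟨insert_subset (hO hpO) (singleton_subset_iff.2 (hC hj)), Or.inr (card_pair hpj.ne)⟩
  · obtain ⟨hj₁, rfl⟩ := (isArc_configOf_iff hO hOC hbal).1 ⟨by omega, h₁⟩
    obtain ⟨hj₂, rfl⟩ := (isArc_configOf_iff hO hOC hbal).1 ⟨by omega, h₂⟩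
    exact not_partner_lt_partner_lt_lt h0 hOC hbal hj₂ h12 h21 h22

end ConfigOf

lemma configOf_openers_closers_singletons {m : ℕ} {x : Finset (Finset ℕ)} (hx : IsConfig m x) :
    configOf (openers m x) (closers m x) (singletons m x) = x := by
  ext B
  rw [mem_configOf]
  constructor
  · rintro (⟨s, hs, rfl⟩ | ⟨j, hj, rfl⟩)
    · exact (mem_filter.1 hs).2
    · obtain ⟨-, i, hij⟩ := mem_filter.1 hj
      rw [hij.partner_eq hx]
      exact hij.2
  · intro hB
    obtain ⟨hsub, h1 | h2⟩ := hx.1 B hB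
    · obtain ⟨s, rfl⟩ := card_eq_one.1 h1
      exact Or.inl ⟨s, mem_filter.2 ⟨hsub (mem_singleton_self s), hB⟩, rfl⟩
    · obtain ⟨a, b, hab, rfl⟩ := card_eq_two.1 h2
      rcases hab.lt_or_gt with hlt | hlt
      · have hij : IsArc x a b := ⟨hlt, hB⟩
        exact Or.inr ⟨b, hij.mem_closers hx, by rw [hij.partner_eq hx]⟩
      · have hij : IsArc x b a := ⟨hlt, pair_comm a b ▸ hB⟩
        exact Or.inr ⟨a, hij.mem_closers hx, by rw [hij.partner_eq hx, pair_comm]⟩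

/-- A bicoloured Motzkin path of length `m`; the steps in `[1, m]` outside `up ∪ down ∪ flat` are
the level steps of the second colour. -/
@[ext]
structure BicoloredMotzkin (m : ℕ) where
  up : Finset ℕ
  down : Finset ℕ
  flat : Finset ℕ
  up_subset : up ⊆ Icc 1 m
  down_subset : down ⊆ Icc 1 m
  flat_subset : flat ⊆ Icc 1 m
  disjoint_up_down : Disjoint up down
  disjoint_up_flat : Disjoint up flat
  disjoint_down_flat : Disjoint down flat
  countLE_down_le_up : ∀ i, countLE down i ≤ countLE up i
  card_up_eq_card_down : #up = #down

noncomputable def configEquiv (m : ℕ) : {x // IsConfig m x} ≃ BicoloredMotzkin m where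
  toFun x :=
    { up := openers m x
      down := closers m x
      flat := singletons m x
      up_subset := filter_subset _ _
      down_subset := filter_subset _ _
      flat_subset := filter_subset _ _
      disjoint_up_down := disjoint_openers_closers x.2
      disjoint_up_flat := disjoint_openers_singletons x.2
      disjoint_down_flat := disjoint_closers_singletons x.2
      countLE_down_le_up := countLE_closers_le_openers x.2
      card_up_eq_card_down := card_openers_eq_card_closers x.2 }
  invFun p := ⟨configOf p.up p.down p.flat, isConfig_configOf p.up_subset p.down_subset
    p.flat_subset p.disjoint_up_down p.disjoint_up_flat p.disjoint_down_flat p.countLE_down_le_up⟩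
  left_inv x := Subtype.ext (configOf_openers_closers_singletons x.2)
  right_inv p := BicoloredMotzkin.ext
    (openers_configOf p.up_subset p.disjoint_up_down p.countLE_down_le_up p.card_up_eq_card_down)
    (closers_configOf p.up_subset p.down_subset p.disjoint_up_down p.countLE_down_le_up)
    (singletons_configOf p.up_subset p.flat_subset p.disjoint_up_down p.countLE_down_le_up)

def trueCount (f : ℕ → Bool) (k : ℕ) : ℕ := #{j ∈ range k | f j}

lemma trueCount_succ (f : ℕ → Bool) (k : ℕ) :
    trueCount f (k + 1) = trueCount f k + if f k then 1 else 0 := by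
  rw [trueCount, range_add_one, filter_insert]
  split_ifs with h
  · rw [card_insert_of_notMem (by simp), trueCount]
  · rfl

lemma trueCount_le (f : ℕ → Bool) (k : ℕ) : trueCount f k ≤ k :=
  (card_filter_le _ _).trans_eq (card_range k)

lemma trueCount_congr {f g : ℕ → Bool} {k : ℕ} (h : ∀ j < k, f j = g j) :
    trueCount f k = trueCount g k :=
  congr_arg card (filter_congr fun j hj ↦ by rw [h j (mem_range.1 hj)])

lemma card_filter_eq_false (f : ℕ → Bool) (k : ℕ) :
    #{j ∈ range k | f j = false} = k - trueCount f k := by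
  have := card_filter_add_card_filter_not (s := range k) (fun j ↦ f j = true)
  simp only [Bool.not_eq_true, card_range] at this
  rw [trueCount]
  omega

lemma card_filter_fin_lt (N k : ℕ) (p : ℕ → Prop) [DecidablePred p] :
    #{i : Fin N | (i : ℕ) < k ∧ p i} = #{j ∈ range (min k N) | p j} := by
  rw [← card_map Fin.valEmbedding]
  congr 1
  ext j
  simp only [mem_map, mem_filter, mem_univ, true_and, Fin.valEmbedding_apply, mem_range, lt_min_iff]
  exact ⟨fun ⟨i, ⟨hik, hp⟩, hij⟩ ↦ hij ▸ ⟨⟨hik, i.2⟩, hp⟩,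
    fun ⟨⟨hjk, hjN⟩, hp⟩ ↦ ⟨⟨j, hjN⟩, ⟨hjk, hp⟩, rfl⟩⟩

def IsDyckWord (n : ℕ) (w : ℕ → Bool) : Prop :=
  trueCount w (2 * n) = n ∧ ∀ k ≤ 2 * n, 2 * trueCount w k ≤ k

lemma isDyckF_iff {n : ℕ} {f : ℕ → Bool} : IsDyckF n (fun i ↦ f i) ↔ IsDyckWord n f := by
  have hcount : ∀ k b, #{i : Fin (2 * n) | (i : ℕ) < k ∧ f i = b} =
      #{j ∈ range (min k (2 * n)) | f j = b} := fun k b ↦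
    card_filter_fin_lt (2 * n) k (fun j ↦ f j = b)
  have hfold (k : ℕ) : #{j ∈ range k | f j = true} = trueCount f k := rfl
  have htotal : #{i : Fin (2 * n) | f i = true} = trueCount f (2 * n) := by
    have h := hcount (2 * n) true
    rw [min_self] at h
    rw [← hfold, ← h]
    simp only [Fin.is_lt, true_and]
  have hle := trueCount_le f
  simp only [IsDyckF, IsDyckWord, hcount, card_filter_eq_false, htotal, hfold]
  refine and_congr_right fun _ ↦ ⟨fun h k hk ↦ ?_, fun h k ↦ ?_⟩
  · have := h k
    rw [min_eq_left hk] at this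
    have := hle k
    omega
  · have := h _ (min_le_right k (2 * n))
    have := hle (min k (2 * n))
    omega

/-- The two letters (`false` for an up step, `true` for a down step) that replace step `i` of a
Motzkin path: up ↦ UU, down ↦ DD, flat ↦ UD, and a level step of the second colour ↦ DU. -/
def letters (O C S : Finset ℕ) (i : ℕ) : Bool × Bool :=
  if i ∈ O then (false, false) else if i ∈ C then (true, true)
  else if i ∈ S then (false, true) else (true, false)

/-- The word `U l₁ l₂ ⋯ lₘ D` with `lᵢ = letters O C S i`, continued by `D` forever. -/
def motzkinWord (O C S : Finset ℕ) (m k : ℕ) : Bool :=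
  if k = 0 then false else if 2 * m < k then true
  else if k % 2 = 1 then (letters O C S ((k + 1) / 2)).1 else (letters O C S (k / 2)).2

section MotzkinWord

variable {O C S : Finset ℕ} {m : ℕ}

lemma motzkinWord_zero : motzkinWord O C S m 0 = false := rfl

lemma motzkinWord_of_lt {k : ℕ} (hk : 2 * m < k) : motzkinWord O C S m k = true := by
  rw [motzkinWord, if_neg (by omega), if_pos hk]

lemma motzkinWord_two_mul_add_one {i : ℕ} (hi : i < m) :
    motzkinWord O C S m (2 * i + 1) = (letters O C S (i + 1)).1 := by
  rw [motzkinWord, if_neg (by omega), if_neg (by omega), if_pos (by omega)]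
  congr 2
  omega

lemma motzkinWord_two_mul_add_two {i : ℕ} (hi : i < m) :
    motzkinWord O C S m (2 * i + 2) = (letters O C S (i + 1)).2 := by
  rw [motzkinWord, if_neg (by omega), if_neg (by omega), if_neg (by omega)]
  congr 2
  omega

/-- Each step contributes one `D`, except an up step (none) and a down step (two). -/
lemma trueCount_motzkinWord (h0O : 0 ∉ O) (h0C : 0 ∉ C) (hOC : Disjoint O C) {i : ℕ}
    (hi : i ≤ m) :
    trueCount (motzkinWord O C S m) (2 * i + 1) + countLE O i = i + countLE C i := by
  induction i with
  | zero => simp [motzkinWord_zero, trueCount, countLE_zero h0O, countLE_zero h0C]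
  | succ i ih =>
    have hstep : trueCount (motzkinWord O C S m) (2 * (i + 1) + 1) =
        trueCount (motzkinWord O C S m) (2 * i + 1) + (if (letters O C S (i + 1)).1 then 1 else 0)
          + (if (letters O C S (i + 1)).2 then 1 else 0) := by
      rw [show 2 * (i + 1) + 1 = 2 * i + 1 + 1 + 1 by ring, trueCount_succ, trueCount_succ,
        motzkinWord_two_mul_add_one (by omega), motzkinWord_two_mul_add_two (by omega)]
    have := ih (by omega)
    rw [hstep, countLE_succ, countLE_succ]
    by_cases hO : i + 1 ∈ O
    · simp only [letters, hO, disjoint_left.1 hOC hO, ↓reduceIte, Bool.false_eq_true]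
      omega
    · by_cases hC : i + 1 ∈ C <;> by_cases hS : i + 1 ∈ S <;>
        simp only [letters, hO, hC, hS, ↓reduceIte, Bool.false_eq_true] <;> omega

end MotzkinWord

namespace BicoloredMotzkin

variable {m : ℕ}

def word (p : BicoloredMotzkin m) : ℕ → Bool := motzkinWord p.up p.down p.flat m

lemma trueCount_word (p : BicoloredMotzkin m) {i : ℕ} (hi : i ≤ m) :
    trueCount p.word (2 * i + 1) + countLE p.up i = i + countLE p.down i :=
  trueCount_motzkinWord (zero_notMem_of_subset_Icc p.up_subset)
    (zero_notMem_of_subset_Icc p.down_subset) p.disjoint_up_down hi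

lemma isDyckF_word (p : BicoloredMotzkin m) : IsDyckF (m + 1) (fun k ↦ p.word k) := by
  have hcard : countLE p.up m = countLE p.down m := by
    rw [countLE_of_subset_Icc p.up_subset le_rfl, countLE_of_subset_Icc p.down_subset le_rfl,
      p.card_up_eq_card_down]
  have hodd (i : ℕ) (hi : i ≤ m) : trueCount p.word (2 * i + 1) ≤ i := by
    have := p.trueCount_word hi
    have := p.countLE_down_le_up i
    omega
  refine isDyckF_iff.2 ⟨?_, fun k hk ↦ ?_⟩
  · have := p.trueCount_word le_rfl
    rw [show 2 * (m + 1) = 2 * m + 1 + 1 by ring, trueCount_succ, word,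
      motzkinWord_of_lt (by omega)]
    rw [word] at this
    simp only [if_true]
    omega
  · obtain ⟨i, rfl | rfl⟩ := Nat.even_or_odd' k
    · rcases i with _ | i
      · simp [trueCount]
      · have := hodd i (by omega)
        have := trueCount_succ p.word (2 * i + 1)
        rw [show 2 * i + 1 + 1 = 2 * (i + 1) by ring] at this
        split_ifs at this <;> omega
    · have := hodd i (by omega)
      omega

end BicoloredMotzkin

def stepsOf (w : ℕ → Bool) (m : ℕ) (b : Bool × Bool) : Finset ℕ :=
  {i ∈ Icc 1 m | (w (2 * i - 1), w (2 * i)) = b}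

section StepsOf

variable {w : ℕ → Bool} {m : ℕ}

lemma stepsOf_subset {b : Bool × Bool} : stepsOf w m b ⊆ Icc 1 m := filter_subset _ _

lemma disjoint_stepsOf {b b' : Bool × Bool} (h : b ≠ b') :
    Disjoint (stepsOf w m b) (stepsOf w m b') :=
  disjoint_filter.2 fun _ _ hb hb' ↦ h (hb.symm.trans hb')

lemma letters_stepsOf {i : ℕ} (hi : i ∈ Icc 1 m) :
    letters (stepsOf w m (false, false)) (stepsOf w m (true, true)) (stepsOf w m (false, true)) i =
      (w (2 * i - 1), w (2 * i)) := by
  simp only [letters, stepsOf, mem_filter, hi, true_and]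
  cases w (2 * i - 1) <;> cases w (2 * i) <;> rfl

lemma motzkinWord_stepsOf (h0 : w 0 = false) {k : ℕ} (hk : k ≤ 2 * m) :
    motzkinWord (stepsOf w m (false, false)) (stepsOf w m (true, true))
      (stepsOf w m (false, true)) m k = w k := by
  obtain ⟨i, rfl | rfl⟩ := Nat.even_or_odd' k
  · rcases i with _ | i
    · exact h0.symm
    · rw [show 2 * (i + 1) = 2 * i + 2 by ring, motzkinWord_two_mul_add_two (by omega),
        letters_stepsOf (mem_Icc.2 ⟨by omega, by omega⟩), show 2 * (i + 1) = 2 * i + 2 by ring]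
  · rw [motzkinWord_two_mul_add_one (by omega),
      letters_stepsOf (mem_Icc.2 ⟨by omega, by omega⟩)]
    simp only [show 2 * (i + 1) - 1 = 2 * i + 1 by omega]

end StepsOf

lemma stepsOf_motzkinWord {O C S : Finset ℕ} {m : ℕ} (b : Bool × Bool) :
    stepsOf (motzkinWord O C S m) m b = {i ∈ Icc 1 m | letters O C S i = b} := by
  refine filter_congr fun i hi ↦ ?_
  obtain ⟨j, rfl⟩ : ∃ j, i = j + 1 := ⟨i - 1, by have := (mem_Icc.1 hi).1; omega⟩
  have hj : j < m := by have := (mem_Icc.1 hi).2; omega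
  rw [show 2 * (j + 1) - 1 = 2 * j + 1 by omega, show 2 * (j + 1) = 2 * j + 2 by ring,
    motzkinWord_two_mul_add_one hj, motzkinWord_two_mul_add_two hj]

section Letters

variable {O C S : Finset ℕ} {m : ℕ}

lemma filter_letters_eq_up (hO : O ⊆ Icc 1 m) :
    {i ∈ Icc 1 m | letters O C S i = (false, false)} = O := by
  ext i
  rw [mem_filter]
  by_cases hi : i ∈ O
  · simp [letters, hi, hO hi]
  · simp only [letters, hi, if_false, iff_false]
    split_ifs <;> simp

lemma filter_letters_eq_down (hC : C ⊆ Icc 1 m) (hOC : Disjoint O C) :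
    {i ∈ Icc 1 m | letters O C S i = (true, true)} = C := by
  ext i
  rw [mem_filter]
  by_cases hi : i ∈ C
  · simp [letters, hi, hC hi, disjoint_right.1 hOC hi]
  · simp only [letters, hi, if_false, iff_false]
    split_ifs <;> simp

lemma filter_letters_eq_flat (hS : S ⊆ Icc 1 m) (hOS : Disjoint O S) (hCS : Disjoint C S) :
    {i ∈ Icc 1 m | letters O C S i = (false, true)} = S := by
  ext i
  rw [mem_filter]
  by_cases hi : i ∈ S
  · simp [letters, hi, hS hi, disjoint_right.1 hOS hi, disjoint_right.1 hCS hi]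
  · simp only [letters, hi, if_false, iff_false]
    split_ifs <;> simp

end Letters

namespace IsDyckWord

variable {m : ℕ} {w : ℕ → Bool} (hw : IsDyckWord (m + 1) w)
include hw

lemma apply_zero : w 0 = false := by
  have := hw.2 1 (by omega)
  rw [trueCount_succ] at this
  cases h : w 0 <;> simp_all [trueCount]

lemma trueCount_two_mul_add_one_le {i : ℕ} (hi : i ≤ m) : trueCount w (2 * i + 1) ≤ i := by
  have := hw.2 (2 * i + 1) (by omega)
  omega

lemma apply_two_mul_add_one : w (2 * m + 1) = true ∧ trueCount w (2 * m + 1) = m := by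
  have htotal := hw.1
  have := hw.trueCount_two_mul_add_one_le le_rfl
  rw [show 2 * (m + 1) = 2 * m + 1 + 1 by ring, trueCount_succ] at htotal
  split_ifs at htotal with h
  · exact ⟨h, by omega⟩
  · omega

lemma trueCount_stepsOf {i : ℕ} (hi : i ≤ m) :
    trueCount w (2 * i + 1) + countLE (stepsOf w m (false, false)) i =
      i + countLE (stepsOf w m (true, true)) i := by
  rw [trueCount_congr fun j hj ↦
    (motzkinWord_stepsOf hw.apply_zero (show j ≤ 2 * m by omega)).symm]
  exact trueCount_motzkinWord (zero_notMem_of_subset_Icc stepsOf_subset)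
    (zero_notMem_of_subset_Icc stepsOf_subset) (disjoint_stepsOf (by decide)) hi

end IsDyckWord

namespace BicoloredMotzkin

variable {m : ℕ}

def ofWord {w : ℕ → Bool} (hw : IsDyckWord (m + 1) w) : BicoloredMotzkin m where
  up := stepsOf w m (false, false)
  down := stepsOf w m (true, true)
  flat := stepsOf w m (false, true)
  up_subset := stepsOf_subset
  down_subset := stepsOf_subset
  flat_subset := stepsOf_subset
  disjoint_up_down := disjoint_stepsOf (by decide)
  disjoint_up_flat := disjoint_stepsOf (by decide)
  disjoint_down_flat := disjoint_stepsOf (by decide)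
  countLE_down_le_up i := by
    have h := hw.trueCount_stepsOf (min_le_right i m)
    have := hw.trueCount_two_mul_add_one_le (min_le_right i m)
    rw [countLE_min_of_subset_Icc stepsOf_subset, countLE_min_of_subset_Icc stepsOf_subset] at h
    omega
  card_up_eq_card_down := by
    have := hw.trueCount_stepsOf le_rfl
    rw [countLE_of_subset_Icc stepsOf_subset le_rfl,
      countLE_of_subset_Icc stepsOf_subset le_rfl, hw.apply_two_mul_add_one.2] at this
    omega

lemma word_ofWord {w : ℕ → Bool} (hw : IsDyckWord (m + 1) w) {k : ℕ} (hk : k < 2 * (m + 1)) :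
    (ofWord hw).word k = w k := by
  rcases le_or_gt k (2 * m) with hk' | hk'
  · exact motzkinWord_stepsOf hw.apply_zero hk'
  · rw [word, motzkinWord_of_lt hk', show k = 2 * m + 1 by omega, hw.apply_two_mul_add_one.1]

lemma ofWord_eq {w : ℕ → Bool} (hw : IsDyckWord (m + 1) w) {p : BicoloredMotzkin m}
    (hwp : w = p.word) : ofWord hw = p := by
  subst hwp
  ext1 <;> simp only [ofWord, word, stepsOf_motzkinWord]
  · exact filter_letters_eq_up p.up_subset
  · exact filter_letters_eq_down p.down_subset p.disjoint_up_down
  · exact filter_letters_eq_flat p.flat_subset p.disjoint_up_flat p.disjoint_down_flat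

end BicoloredMotzkin

def extendWord {n : ℕ} (w : Fin n → Bool) (k : ℕ) : Bool :=
  if h : k < n then w ⟨k, h⟩ else true

lemma extendWord_fin {n : ℕ} (w : Fin n → Bool) (i : Fin n) : extendWord w i = w i :=
  dif_pos i.2

def dyckEquiv (m : ℕ) :
    BicoloredMotzkin m ≃ {w : Fin (2 * (m + 1)) → Bool // IsDyckF (m + 1) w} where
  toFun p := ⟨fun k ↦ p.word k, p.isDyckF_word⟩
  invFun w := BicoloredMotzkin.ofWord (w := extendWord w.1)
    (isDyckF_iff.1 (by simpa only [extendWord_fin] using w.2))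
  left_inv p := BicoloredMotzkin.ofWord_eq _ <| funext fun k ↦ by
    unfold extendWord
    split_ifs with hk
    · rfl
    · exact (motzkinWord_of_lt (by omega)).symm
  right_inv w := Subtype.ext <| funext fun i ↦
    (BicoloredMotzkin.word_ofWord _ i.2).trans (extendWord_fin w.1 i)

end NoncrossingConfig

theorem configs_equiv_dyck (n : ℕ) (hn : 1 ≤ n) :
    Nonempty ({x : Finset (Finset ℕ) // IsConfig (n - 1) x} ≃
      {w : Fin (2 * n) → Bool // IsDyckF n w}) := by
  obtain ⟨m, rfl⟩ : ∃ m, n = m + 1 := ⟨n - 1, by omega⟩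
  exact ⟨(NoncrossingConfig.configEquiv m).trans (NoncrossingConfig.dyckEquiv m)⟩
end

section
/- For every positive integer n, (2n+1) · Σ_{2k+x+y=n-1} multinom(n; k, k+1, x, y) = n · C(2n+1, n), where the sum is over nonnegative integers k,x,y with 2k+x+y = n−1 and multinom(n; k,k+1,x,y) = n!/(k!(k+1)!x!y!). -/
/-!
Expanding `(X + 1) ^ (2n) = (X ^ 2 + 1 + X + X) ^ n` by the multinomial theorem, the coefficient
of `X ^ (n - 1)` is the sum over `(k, j, x, y)` with `k + j + x + y = n` and `2k + x + y = n - 1`,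
which forces `j = k + 1`; so the sum equals `C(2n, n - 1)`. The derivative relation
`(2n + 1) C(2n, n - 1) = n C(2n + 1, n)` finishes the proof.
-/

open Polynomial Finset

theorem Polynomial.coeff_sum_X_pow_pow {R ι : Type*} [CommSemiring R] [DecidableEq ι]
    (s : Finset ι) (w : ι → ℕ) (n m : ℕ) :
    ((∑ i ∈ s, (X : R[X]) ^ w i) ^ n).coeff m =
      ∑ g ∈ s.piAntidiag n with ∑ i ∈ s, w i * g i = m, (Nat.multinomial s g : R) := by
  simp only [sum_pow_eq_sum_piAntidiag, ← pow_mul, prod_pow_eq_pow_sum, finsetSum_coeff,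
    ← C_eq_natCast, coeff_C_mul_X_pow, sum_filter]
  exact sum_congr rfl fun g _ => by simp only [eq_comm]

theorem sum_piAntidiag_fin_four_eq_sum_range {M : Type*} [AddCommMonoid M]
    (f : (Fin 4 → ℕ) → M) (n : ℕ) (hn : 1 ≤ n) :
    ∑ g ∈ (univ : Finset (Fin 4)).piAntidiag n with 2 * g 0 + g 2 + g 3 = n - 1, f g =
      ∑ k ∈ range n, ∑ x ∈ range n, ∑ y ∈ range n,
        if 2 * k + x + y = n - 1 then f ![k, k + 1, x, y] else 0 := by
  rw [← sum_product', ← sum_product', ← sum_filter]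
  have hrebuild :
      ∀ g ∈ {g ∈ (univ : Finset (Fin 4)).piAntidiag n | 2 * g 0 + g 2 + g 3 = n - 1},
      ![g 0, g 0 + 1, g 2, g 3] = g := by
    intro g hg
    simp only [mem_filter, mem_piAntidiag, Fin.sum_univ_four] at hg
    ext i
    fin_cases i <;>
      simp only [Fin.zero_eta, Fin.mk_one, Fin.reduceFinMk, Fin.isValue, Matrix.cons_val_zero,
        Matrix.cons_val_one, Matrix.cons_val]
    omega
  refine sum_bij' (fun g _ => ((g 0, g 2), g 3)) (fun t _ => ![t.1.1, t.1.1 + 1, t.1.2, t.2])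
    ?_ ?_ hrebuild (fun t _ => by simp) (fun g hg => by rw [hrebuild g hg])
  · intro g hg
    simp only [mem_filter, mem_piAntidiag, Fin.sum_univ_four, mem_product, mem_range] at hg ⊢
    omega
  · rintro ⟨⟨k, x⟩, y⟩ ht
    simp only [mem_filter, mem_product, mem_range] at ht
    simp only [mem_filter, mem_piAntidiag, Fin.sum_univ_four, Matrix.cons_val_zero,
      Matrix.cons_val_one, Matrix.cons_val, mem_univ, implies_true, and_true]
    omega

theorem multinomial_sum_identity (n : ℕ) (hn : 1 ≤ n) :
    (2 * n + 1) *
      (∑ k ∈ Finset.range n, ∑ x ∈ Finset.range n, ∑ y ∈ Finset.range n,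
        if 2 * k + x + y = n - 1 then Nat.multinomial Finset.univ ![k, k + 1, x, y] else 0)
    = n * (2 * n + 1).choose n := by
  have hsquare : ∑ i, (X : ℕ[X]) ^ (![2, 0, 1, 1] : Fin 4 → ℕ) i = (X + 1) ^ 2 := by
    simp only [Fin.sum_univ_four, Matrix.cons_val_zero, Matrix.cons_val_one, Matrix.cons_val,
      pow_zero, pow_one]
    ring
  have hcoeff : ∑ g ∈ (univ : Finset (Fin 4)).piAntidiag n with 2 * g 0 + g 2 + g 3 = n - 1,
      Nat.multinomial univ g = (2 * n).choose (n - 1) := by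
    have h := coeff_sum_X_pow_pow (R := ℕ) univ ![2, 0, 1, 1] n (n - 1)
    rw [hsquare, ← pow_mul, coeff_X_add_one_pow] at h
    simpa [Fin.sum_univ_four] using h.symm
  rw [← sum_piAntidiag_fin_four_eq_sum_range _ n hn, hcoeff, Nat.add_one_mul_choose_eq,
    Nat.sub_add_cancel hn, mul_comm]
end

section
/- Let n be odd. Then Σ_{2a+b+c=(n-1)/2} multinom((n-1)/2; a,a,b,c) + Σ_{2a-1+b+c=(n-1)/2} multinom((n-1)/2; a,a-1,b,c) = C(n, (n+1)/2), where sums range over nonnegative integers (with a ≥ 1 in the second sum). -/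
/-! Splitting `2X` as `X + X`, `(X + 1)^(2m) = (X^2 + 1 + X + X)^m`, so by the multinomial theorem
`C(2m, k)` is the sum of `multinomial (κ₀, κ₁, κ₂, κ₃)` over the compositions `κ` of `m` into four
parts with `2κ₀ + κ₂ + κ₃ = k`. For `k = m + j` this condition says `κ₀ = κ₁ + j`, so the two sums
are `C(2m, m)` and `C(2m, m + 1)`, which add up to `C(2m + 1, m + 1)` by Pascal's rule. -/

open scoped Classical

open Finset Polynomial

theorem choose_two_mul_eq_sum_multinomial (m k : ℕ) :
    (2 * m).choose k = ∑ κ ∈ piAntidiag (univ : Finset (Fin 4)) m,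
      if 2 * κ 0 + κ 2 + κ 3 = k then Nat.multinomial univ κ else 0 := by
  have hsplit : (X + 1 : ℕ[X]) ^ (2 * m) = (∑ i, ![X ^ 2, 1, X, X] i) ^ m := by
    rw [Fin.sum_univ_four, pow_mul]
    simp only [Matrix.cons_val]
    ring
  rw [← Nat.cast_id ((2 * m).choose k), ← coeff_X_add_one_pow, hsplit, sum_pow_eq_sum_piAntidiag,
    finsetSum_coeff]
  refine sum_congr rfl fun κ _ => ?_
  simp [Fin.prod_univ_four, ← pow_mul, ← pow_add, coeff_X_pow, eq_comm]

theorem mem_piAntidiag_univ_fin_four {m : ℕ} {κ : Fin 4 → ℕ} :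
    κ ∈ piAntidiag univ m ↔ κ 0 + κ 1 + κ 2 + κ 3 = m := by
  simp [mem_piAntidiag, Fin.sum_univ_four]

theorem sum_range_ite_eq_sum_piAntidiag {M : Type*} [AddCommMonoid M] (g : (Fin 4 → ℕ) → M)
    (m j : ℕ) :
    (∑ a ∈ range (m + 1), ∑ b ∈ range (m + 1), ∑ c ∈ range (m + 1),
      if j ≤ a ∧ 2 * a + b + c = m + j then g ![a, a - j, b, c] else 0) =
    ∑ κ ∈ piAntidiag univ m, if 2 * κ 0 + κ 2 + κ 3 = m + j then g κ else 0 := by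
  simp_rw [← sum_product', ← sum_filter]
  refine sum_nbij' (fun t => ![t.1, t.1 - j, t.2.1, t.2.2]) (fun κ => (κ 0, κ 2, κ 3))
    ?_ ?_ ?_ ?_ fun _ _ => rfl
  · simp only [mem_filter, mem_product, mem_range, mem_piAntidiag_univ_fin_four, Matrix.cons_val]
    omega
  · simp only [mem_filter, mem_product, mem_range, mem_piAntidiag_univ_fin_four]
    omega
  · simp
  · intro κ hκ
    simp only [mem_filter, mem_piAntidiag_univ_fin_four] at hκ
    ext i
    fin_cases i <;> simp [show κ 1 = κ 0 - j by omega]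

theorem sum_multinomial_eq_choose (m j : ℕ) :
    (∑ a ∈ range (m + 1), ∑ b ∈ range (m + 1), ∑ c ∈ range (m + 1),
      if j ≤ a ∧ 2 * a + b + c = m + j then Nat.multinomial univ ![a, a - j, b, c] else 0) =
    (2 * m).choose (m + j) := by
  rw [sum_range_ite_eq_sum_piAntidiag, choose_two_mul_eq_sum_multinomial]

theorem multinomial_sum_odd (n m : ℕ) (hm : n = 2 * m + 1) :
    (∑ a ∈ Finset.range (m + 1), ∑ b ∈ Finset.range (m + 1), ∑ c ∈ Finset.range (m + 1),
      if 2 * a + b + c = m then Nat.multinomial Finset.univ ![a, a, b, c] else 0) +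
    (∑ a ∈ Finset.range (m + 1), ∑ b ∈ Finset.range (m + 1), ∑ c ∈ Finset.range (m + 1),
      if 1 ≤ a ∧ 2 * a + b + c = m + 1 then Nat.multinomial Finset.univ ![a, a - 1, b, c] else 0)
    = n.choose (m + 1) := by
  have hfirst := sum_multinomial_eq_choose m 0
  simp only [zero_le, true_and, Nat.sub_zero, add_zero] at hfirst
  rw [hfirst, sum_multinomial_eq_choose m 1, hm, Nat.choose_succ_succ]
end

section
/- Let ζ be a primitive m-th root of unity with m > 2 and m dividing n−1, and suppose m divides 2k. Then the q-Catalan number Cat_k(q) = (1/[k+1]_q)·qbinom(2k,k) evaluated at q = ζ equals C(2k/m, k/m) if m divides k, and equals 0 otherwise. -/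
open scoped Classical

/-!
Clearing denominators with `(1 - q)`, the identity `Cat_k(q) = [2k]_q! / ([k]_q!² [k+1]_q)` becomes
`P(q) · (q;q)_k² · (1 - q^{k+1}) = (q;q)_{2k} · (1 - q)` for the `q`-Pochhammer symbol
`(q;q)_N = ∏_{1 ≤ i ≤ N} (1 - q^i)`. Substitute `q ↦ ζq` and look at `q = 1`: the factor `1 - (ζq)^i`
vanishes there exactly when `m ∣ i`, and then to first order, with `(1 - (ζq)^i)/(1 - q) → i`. So
`(ζq;ζq)_N = (1 - q)^⌊N/m⌋ · R_N(q)` with `R_N(1)` an explicit nonzero product, and comparing the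
orders `2⌊k/m⌋` and `⌊2k/m⌋` of the two sides gives `0` unless `m ∣ k`. If `k = ms`, the factors
`R` are periodic up to the multiples of `m`, which contribute `(2s)!/(s!)²`.
-/

open Polynomial Finset

section QAnalogues

variable {R : Type*} [CommRing R]

def qPochhammer (q : R) (N : ℕ) : R :=
  ∏ i ∈ range N, (1 - q ^ (i + 1))

lemma map_qPochhammer {S F : Type*} [CommRing S] [FunLike F R S] [RingHomClass F R S]
    (f : F) (q : R) (N : ℕ) : f (qPochhammer q N) = qPochhammer (f q) N := by
  simp [qPochhammer, map_prod]

variable {K : Type*} [Field K]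

lemma qInt_mul_one_sub (q : K) (n : ℕ) : qInt q n * (1 - q) = 1 - q ^ n := by
  rw [qInt, mul_comm, mul_neg_geom_sum]

lemma qFact_mul_one_sub_pow (q : K) (N : ℕ) : qFact q N * (1 - q) ^ N = qPochhammer q N := by
  simp_rw [qPochhammer, ← qInt_mul_one_sub, prod_mul_distrib, prod_const, card_range, qFact]

lemma qInt_ne_zero {q : K} (hq : ¬IsOfFinOrder q) {n : ℕ} (hn : 0 < n) : qInt q n ≠ 0 := by
  intro h
  have := qInt_mul_one_sub q n
  rw [h, zero_mul, eq_comm, sub_eq_zero] at this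
  exact hq (isOfFinOrder_iff_pow_eq_one.mpr ⟨n, hn, this.symm⟩)

lemma qFact_ne_zero {q : K} (hq : ¬IsOfFinOrder q) (N : ℕ) : qFact q N ≠ 0 :=
  prod_ne_zero_iff.mpr fun i _ => qInt_ne_zero hq i.succ_pos

lemma qCat_mul_qPochhammer {q : K} (hq : ¬IsOfFinOrder q) (k : ℕ) :
    qCat q k * qPochhammer q k ^ 2 * (1 - q ^ (k + 1)) = qPochhammer q (2 * k) * (1 - q) := by
  rw [← qFact_mul_one_sub_pow, ← qFact_mul_one_sub_pow, ← qInt_mul_one_sub q (k + 1), qCat,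
    qBinom, show 2 * k - k = k by omega]
  field_simp [qFact_ne_zero hq, qInt_ne_zero hq k.succ_pos]
  ring

end QAnalogues

lemma RatFunc.not_isOfFinOrder_X {K : Type*} [CommRing K] [IsDomain K] :
    ¬IsOfFinOrder (RatFunc.X : RatFunc K) := by
  intro h
  obtain ⟨n, hn, hXn⟩ := isOfFinOrder_iff_pow_eq_one.mp h
  exact RatFunc.transcendental_X
    ⟨Polynomial.X ^ n - 1, by simpa using X_pow_sub_C_ne_zero hn (1 : K), by simp [hXn]⟩

section Regularization

variable {K : Type*} [CommRing K] {ζ : K} {m : ℕ}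

/-- The value at `q = 1` of `(1 - (ζ q) ^ i) / (1 - q)` if `m ∣ i`, and of `1 - (ζ q) ^ i`
otherwise. -/
def regFactor (ζ : K) (m i : ℕ) : K :=
  if m ∣ i then (i : K) else 1 - ζ ^ i

def regPochhammer (ζ : K) (m N : ℕ) : K :=
  ∏ i ∈ range N, regFactor ζ m (i + 1)

lemma exists_one_sub_C_mul_X_pow_eq (hζ : ζ ^ m = 1) (i : ℕ) :
    ∃ r : K[X], 1 - (C ζ * X) ^ i = (1 - X) ^ (if m ∣ i then 1 else 0) * r ∧
      r.eval 1 = regFactor ζ m i := by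
  by_cases hi : m ∣ i
  · obtain ⟨j, rfl⟩ := hi
    refine ⟨∑ l ∈ range (m * j), X ^ l, ?_, by simp [regFactor]⟩
    rw [if_pos (dvd_mul_right m j), pow_one, mul_neg_geom_sum, mul_pow, ← C_pow, pow_mul, hζ,
      one_pow, C_1, one_mul]
  · exact ⟨1 - (C ζ * X) ^ i, by simp [hi], by simp [regFactor, hi]⟩

lemma exists_qPochhammer_C_mul_X_eq (hζ : ζ ^ m = 1) (N : ℕ) :
    ∃ r : K[X], qPochhammer (C ζ * X) N = (1 - X) ^ (N / m) * r ∧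
      r.eval 1 = regPochhammer ζ m N := by
  induction N with
  | zero => exact ⟨1, by simp [qPochhammer], by simp [regPochhammer]⟩
  | succ N ih =>
    obtain ⟨r, hr, hr1⟩ := ih
    obtain ⟨s, hs, hs1⟩ := exists_one_sub_C_mul_X_pow_eq hζ (N + 1)
    refine ⟨r * s, ?_, by rw [regPochhammer, prod_range_succ, eval_mul, hr1, hs1, regPochhammer]⟩
    rw [qPochhammer, prod_range_succ, ← qPochhammer, hr, hs, Nat.succ_div, pow_add]
    ring

lemma regPochhammer_ne_zero [IsDomain K] [CharZero K] (hζ : IsPrimitiveRoot ζ m) (N : ℕ) :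
    regPochhammer ζ m N ≠ 0 := by
  refine prod_ne_zero_iff.mpr fun i _ => ?_
  unfold regFactor
  split_ifs with hi
  · exact Nat.cast_ne_zero.mpr i.succ_ne_zero
  · exact sub_ne_zero.mpr fun h => hi ((hζ.pow_eq_one_iff_dvd _).mp h.symm)

lemma regFactor_mul_add (hζ : ζ ^ m = 1) (a : ℕ) {i : ℕ} (hi : 0 < i) (him : i < m) :
    regFactor ζ m (m * a + i) = regFactor ζ m i := by
  have hdvd : ¬m ∣ i := Nat.not_dvd_of_pos_of_lt hi him
  rw [regFactor, regFactor, if_neg ((Nat.dvd_add_right (dvd_mul_right m a)).not.mpr hdvd),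
    if_neg hdvd, pow_add, pow_mul, hζ, one_pow, one_mul]

lemma regPochhammer_mul (hζ : ζ ^ m = 1) (hm : 0 < m) (a : ℕ) :
    regPochhammer ζ m (m * a) = a.factorial * regPochhammer ζ m m ^ a := by
  obtain ⟨n, rfl⟩ : ∃ n, m = n + 1 := ⟨m - 1, by omega⟩
  induction a with
  | zero => simp [regPochhammer]
  | succ a ih =>
    have hblock : ∏ j ∈ range (n + 1), regFactor ζ (n + 1) ((n + 1) * a + (j + 1)) =
        (a + 1) * regPochhammer ζ (n + 1) (n + 1) := by
      rw [regPochhammer, prod_range_succ, prod_range_succ,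
        prod_congr rfl fun (j : ℕ) hj => regFactor_mul_add hζ a j.succ_pos (by simpa using hj)]
      simp only [regFactor, dvd_refl, dvd_mul_right, if_true, ← mul_add_one]
      push_cast
      ring
    rw [mul_add_one, regPochhammer, prod_range_add, ← regPochhammer, ih]
    simp only [add_assoc] at hblock ⊢
    rw [hblock, Nat.factorial_succ]
    push_cast
    ring

lemma regPochhammer_two_mul (hζ : ζ ^ m = 1) (hm : 0 < m) (s : ℕ) :
    regPochhammer ζ m (2 * (m * s)) = (2 * s).choose s * regPochhammer ζ m (m * s) ^ 2 := by
  rw [show 2 * (m * s) = m * (2 * s) by ring, regPochhammer_mul hζ hm, regPochhammer_mul hζ hm,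
    ← Nat.choose_mul_factorial_mul_factorial (show s ≤ 2 * s by omega),
    show 2 * s - s = s by omega]
  push_cast
  ring

lemma eval_one_eq_of_one_sub_X_pow_mul_eq [IsDomain K] {A B : K[X]} {a b : ℕ} (hab : a ≤ b)
    (h : (1 - X) ^ a * A = (1 - X) ^ b * B) : A.eval 1 = 0 ^ (b - a) * B.eval 1 := by
  obtain ⟨c, rfl⟩ := Nat.exists_eq_add_of_le hab
  have hX : (1 - X : K[X]) ^ a ≠ 0 := pow_ne_zero a fun h => by simpa using congrArg (eval 0) h
  rw [pow_add, mul_assoc] at h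
  rw [mul_left_cancel₀ hX h]
  simp

lemma eval_one_aeval_C_mul_X {R : Type*} [CommRing R] [Algebra R K] (ζ : K) (P : R[X]) :
    (aeval (C ζ * X) P).eval 1 = aeval ζ P := by
  rw [← coe_aeval_eq_eval, ← AlgHom.restrictScalars_apply R, ← aeval_algHom_apply]
  simp

lemma aeval_mul_regPochhammer [IsDomain K] {R : Type*} [CommRing R] [Algebra R K]
    (hζ : ζ ^ m = 1) {P : R[X]} {k : ℕ}
    (hP : P * qPochhammer X k ^ 2 * (1 - X ^ (k + 1)) = qPochhammer X (2 * k) * (1 - X)) :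
    aeval ζ P * regPochhammer ζ m k ^ 2 * (1 - ζ ^ (k + 1)) =
      0 ^ (2 * k / m - 2 * (k / m)) * (regPochhammer ζ m (2 * k) * (1 - ζ)) := by
  have hPu := congrArg (aeval (C ζ * X)) hP
  simp only [map_mul, map_pow, map_sub, map_one, map_qPochhammer, aeval_X] at hPu
  obtain ⟨r, hr, hr1⟩ := exists_qPochhammer_C_mul_X_eq hζ k
  obtain ⟨r', hr', hr'1⟩ := exists_qPochhammer_C_mul_X_eq hζ (2 * k)
  rw [hr, hr'] at hPu
  have := eval_one_eq_of_one_sub_X_pow_mul_eq (Nat.mul_div_le_mul_div_assoc 2 k m)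
    (A := aeval (C ζ * X) P * r ^ 2 * (1 - (C ζ * X) ^ (k + 1))) (B := r' * (1 - C ζ * X))
    (by linear_combination hPu)
  simpa [eval_one_aeval_C_mul_X, hr1, hr'1] using this

end Regularization

lemma Nat.two_mul_div_eq_of_dvd_two_mul {m k : ℕ} (h2k : m ∣ 2 * k) (hk : ¬m ∣ k) :
    2 * k / m = 2 * (k / m) + 1 := by
  have hm : 0 < m := Nat.pos_of_ne_zero fun h => hk (by simp_all)
  have hr : k % m < m := Nat.mod_lt k hm
  have hr0 : k % m ≠ 0 := fun h => hk (Nat.dvd_of_mod_eq_zero h)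
  have hk' : 2 * k = m * (2 * (k / m)) + 2 * (k % m) := by
    linear_combination 2 * (Nat.div_add_mod k m).symm
  have h2r : m ≤ 2 * (k % m) := by
    rw [hk'] at h2k
    exact Nat.le_of_dvd (by omega) ((Nat.dvd_add_right (dvd_mul_right m _)).mp h2k)
  have hq : 2 * (k % m) / m = 1 := Nat.div_eq_of_lt_le (by omega) (by omega)
  rw [hk', Nat.mul_add_div hm, hq]

lemma Nat.not_dvd_add_one_of_dvd_two_mul {m k : ℕ} (hm : 2 < m) (h2k : m ∣ 2 * k) :
    ¬m ∣ k + 1 := fun h =>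
  absurd (Nat.le_of_dvd two_pos
    ((Nat.dvd_add_right h2k).mp (by simpa [mul_add] using h.mul_left 2))) (by omega)

theorem qCatalan_root_of_unity_general (m k : ℕ) (hm : 2 < m)
    (h2k : m ∣ 2 * k) (ζ : ℂ) (hζ : IsPrimitiveRoot ζ m)
    (P : Polynomial ℚ)
    (hP : algebraMap (Polynomial ℚ) (RatFunc ℚ) P = qCat (RatFunc.X : RatFunc ℚ) k) :
    Polynomial.aeval ζ P =
      if m ∣ k then (((2 * k / m).choose (k / m) : ℕ) : ℂ) else 0 := by
  have hPoly : P * qPochhammer X k ^ 2 * (1 - X ^ (k + 1)) = qPochhammer X (2 * k) * (1 - X) := by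
    apply IsFractionRing.injective ℚ[X] (RatFunc ℚ)
    simpa [map_qPochhammer, hP] using qCat_mul_qPochhammer RatFunc.not_isOfFinOrder_X k
  have key := aeval_mul_regPochhammer hζ.pow_eq_one hPoly
  have hV := regPochhammer_ne_zero hζ k
  split_ifs with hk
  · obtain ⟨s, rfl⟩ := hk
    have hm0 : 0 < m := by omega
    have hζ1 : 1 - ζ ≠ 0 := sub_ne_zero.mpr (hζ.ne_one (by omega)).symm
    have hζk : ζ ^ (m * s + 1) = ζ := by rw [pow_succ, pow_mul, hζ.pow_eq_one, one_pow, one_mul]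
    have h2s : 2 * (m * s) / m = 2 * s := by rw [mul_left_comm, Nat.mul_div_cancel_left _ hm0]
    rw [h2s, Nat.mul_div_cancel_left _ hm0, Nat.sub_self, pow_zero, one_mul, hζk,
      regPochhammer_two_mul hζ.pow_eq_one hm0] at key
    rw [h2s, Nat.mul_div_cancel_left _ hm0]
    exact mul_right_cancel₀ (pow_ne_zero 2 hV) (mul_right_cancel₀ hζ1 (by linear_combination key))
  · have hζk : 1 - ζ ^ (k + 1) ≠ 0 := sub_ne_zero.mpr fun h =>
      Nat.not_dvd_add_one_of_dvd_two_mul hm h2k ((hζ.pow_eq_one_iff_dvd _).mp h.symm)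
    rw [Nat.two_mul_div_eq_of_dvd_two_mul h2k hk, Nat.add_sub_cancel_left, zero_pow one_ne_zero,
      zero_mul] at key
    simpa [hV, hζk] using key

theorem qCatalan_root_of_unity (m n k : ℕ) (hm : 2 < m) (hmn : m ∣ n - 1)
    (h2k : m ∣ 2 * k) (ζ : ℂ) (hζ : IsPrimitiveRoot ζ m)
    (P : Polynomial ℚ)
    (hP : algebraMap (Polynomial ℚ) (RatFunc ℚ) P = qCat (RatFunc.X : RatFunc ℚ) k) :
    Polynomial.aeval ζ P =
      if m ∣ k then (((2 * k / m).choose (k / m) : ℕ) : ℂ) else 0 :=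
  qCatalan_root_of_unity_general m k hm h2k ζ hζ P hP
end

section
/- Define F(m) by F(0)=1, F(1)=2, F(2)=3, F(3)=6 and, for m ≥ 4, F(m) = 3F(m−2) + Σ_{i=2}^{⌊m/2⌋} Cat_{i−1}·F(m−2i). Then for all k ≥ 0, F(2k) = C(2k+1, k) and F(2k+1) = 2·C(2k+1, k). -/
/-!
Let `C = ∑ catalan n Xⁿ`, `Z = ∑ centralBinom n Xⁿ` and `B = ∑ (2n+1).choose n Xⁿ`. Then `C * Z = B`
and `X * C² + 1 = C`, hence `X * C * B + Z = B`; since `centralBinom (k + 1) = 2 * B_k`, comparing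
coefficients gives `B_{k+1} = 2 B_k + ∑_{i+j=k} catalan i * B_j`. This is the recurrence for `F`
restricted to either parity class, with the odd class scaled by `2`, and the recurrence determines `F`.
-/

open Finset PowerSeries

lemma centralBinom_succ_eq_two_mul_choose (n : ℕ) :
    (n + 1).centralBinom = 2 * (2 * n + 1).choose n := by
  rw [Nat.centralBinom, show 2 * (n + 1) = 2 * n + 1 + 1 by ring, Nat.choose_succ_succ',
    Nat.choose_symm_half, ← two_mul]

/-- Averaging with the image under `p ↦ p.swap` replaces the weight `p.2 + 1` of
`p.2.centralBinom = (p.2 + 1) * catalan p.2` by `(n + 2) / 2`; then Segner's recurrence applies. -/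
lemma sum_antidiagonal_catalan_mul_centralBinom (n : ℕ) :
    ∑ p ∈ antidiagonal n, catalan p.1 * p.2.centralBinom = (2 * n + 1).choose n := by
  have hswap : ∑ p ∈ antidiagonal n, catalan p.1 * p.2.centralBinom =
      ∑ p ∈ antidiagonal n, p.1.centralBinom * catalan p.2 := by
    rw [← Nat.sum_antidiagonal_swap]
    exact sum_congr rfl fun p _ => mul_comm _ _
  refine Nat.eq_of_mul_eq_mul_left two_pos ?_
  calc 2 * ∑ p ∈ antidiagonal n, catalan p.1 * p.2.centralBinom
      = ∑ p ∈ antidiagonal n,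
          (catalan p.1 * p.2.centralBinom + p.1.centralBinom * catalan p.2) := by
        rw [two_mul]; nth_rw 2 [hswap]; rw [sum_add_distrib]
    _ = ∑ p ∈ antidiagonal n, (n + 2) * (catalan p.1 * catalan p.2) := by
        refine sum_congr rfl fun p hp => ?_
        rw [← mem_antidiagonal.mp hp, ← succ_mul_catalan_eq_centralBinom,
          ← succ_mul_catalan_eq_centralBinom]
        ring
    _ = (n + 1).centralBinom := by
        rw [← mul_sum, ← catalan_succ', succ_mul_catalan_eq_centralBinom]
    _ = 2 * (2 * n + 1).choose n := centralBinom_succ_eq_two_mul_choose n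

noncomputable def centralBinomSeries : ℕ⟦X⟧ := mk Nat.centralBinom

noncomputable def oddCentralBinomSeries : ℕ⟦X⟧ := mk fun n => (2 * n + 1).choose n

lemma catalanSeries_mul_centralBinomSeries :
    catalanSeries * centralBinomSeries = oddCentralBinomSeries := by
  ext n
  simp only [coeff_mul, catalanSeries_coeff, centralBinomSeries, oddCentralBinomSeries, coeff_mk,
    sum_antidiagonal_catalan_mul_centralBinom]

lemma X_mul_catalanSeries_mul_oddCentralBinomSeries_add_centralBinomSeries :
    X * (catalanSeries * oddCentralBinomSeries) + centralBinomSeries = oddCentralBinomSeries := by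
  rw [← catalanSeries_mul_centralBinomSeries]
  nth_rw 3 [← catalanSeries_sq_mul_X_add_one]
  ring

lemma choose_succ_eq_two_mul_add_sum_antidiagonal (m : ℕ) :
    (2 * (m + 1) + 1).choose (m + 1) =
      2 * (2 * m + 1).choose m + ∑ p ∈ antidiagonal m, catalan p.1 * (2 * p.2 + 1).choose p.2 := by
  have h := congrArg (coeff (m + 1))
    X_mul_catalanSeries_mul_oddCentralBinomSeries_add_centralBinomSeries
  rw [map_add, coeff_succ_X_mul] at h
  simp only [coeff_mul, catalanSeries_coeff, centralBinomSeries,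
    oddCentralBinomSeries, coeff_mk, centralBinom_succ_eq_two_mul_choose] at h
  omega

lemma choose_eq_three_mul_add_sum_Icc (n : ℕ) :
    (2 * (n + 2) + 1).choose (n + 2) = 3 * (2 * (n + 1) + 1).choose (n + 1) +
      ∑ i ∈ Icc 2 (n + 2), catalan (i - 1) * (2 * (n + 2 - i) + 1).choose (n + 2 - i) := by
  have hIcc : ∑ i ∈ Icc 2 (n + 2), catalan (i - 1) * (2 * (n + 2 - i) + 1).choose (n + 2 - i) =
      ∑ p ∈ antidiagonal n, catalan (p.1 + 1) * (2 * p.2 + 1).choose p.2 := by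
    rw [Nat.sum_antidiagonal_eq_sum_range_succ_mk, ← Ico_add_one_right_eq_Icc,
      sum_Ico_eq_sum_range]
    refine sum_congr (by simp) fun k _ => ?_
    rw [show 2 + k - 1 = k + 1 by omega, show n + 2 - (2 + k) = n - k by omega]
  rw [hIcc, choose_succ_eq_two_mul_add_sum_antidiagonal (n + 1), Nat.sum_antidiagonal_succ,
    catalan_zero, one_mul]
  ring

def catalanRecStep (F : ℕ → ℕ) (m : ℕ) : ℕ :=
  3 * F (m - 2) + ∑ i ∈ Icc 2 (m / 2), catalan (i - 1) * F (m - 2 * i)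

lemma catalanRecStep_congr {F G : ℕ → ℕ} {m : ℕ} (hm : 0 < m) (h : ∀ j < m, F j = G j) :
    catalanRecStep F m = catalanRecStep G m := by
  unfold catalanRecStep
  rw [h (m - 2) (by omega)]
  congr 1
  refine sum_congr rfl fun i hi => ?_
  rw [h (m - 2 * i) (by grind)]

lemma eq_of_forall_eq_catalanRecStep {F G : ℕ → ℕ}
    (hF : ∀ m, 4 ≤ m → F m = catalanRecStep F m) (hG : ∀ m, 4 ≤ m → G m = catalanRecStep G m)
    (hinit : ∀ m < 4, F m = G m) : F = G := by
  funext m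
  induction m using Nat.strong_induction_on with
  | _ m ih =>
    rcases lt_or_ge m 4 with hm | hm
    · exact hinit m hm
    · rw [hF m hm, hG m hm, catalanRecStep_congr (by omega) ih]

/-- Both parities at once: `closedForm (2 * k + r) = (r + 1) * (2 * k + 1).choose k` for `r < 2`. -/
def closedForm (m : ℕ) : ℕ := (m % 2 + 1) * (2 * (m / 2) + 1).choose (m / 2)

lemma closedForm_sub_two_mul {m i : ℕ} (hi : i ≤ m / 2) :
    closedForm (m - 2 * i) = (m % 2 + 1) * (2 * (m / 2 - i) + 1).choose (m / 2 - i) := by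
  rw [closedForm, show (m - 2 * i) % 2 = m % 2 by omega, show (m - 2 * i) / 2 = m / 2 - i by omega]

lemma closedForm_eq_catalanRecStep {m : ℕ} (hm : 4 ≤ m) :
    closedForm m = catalanRecStep closedForm m := by
  obtain ⟨n, hn⟩ : ∃ n, m / 2 = n + 2 := ⟨m / 2 - 2, by omega⟩
  have hsum : ∑ i ∈ Icc 2 (m / 2), catalan (i - 1) * closedForm (m - 2 * i) =
      (m % 2 + 1) * ∑ i ∈ Icc 2 (n + 2),
        catalan (i - 1) * (2 * (n + 2 - i) + 1).choose (n + 2 - i) := by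
    rw [mul_sum, hn]
    refine sum_congr rfl fun i hi => ?_
    rw [closedForm_sub_two_mul (by grind), hn]
    ring
  rw [catalanRecStep, hsum, show m - 2 = m - 2 * 1 by rfl, closedForm_sub_two_mul (by omega),
    closedForm, hn, show n + 2 - 1 = n + 1 from rfl, choose_eq_three_mul_add_sum_Icc]
  ring

open scoped Classical

theorem recurrence_closed_form (F : ℕ → ℕ)
    (h0 : F 0 = 1) (h1 : F 1 = 2) (h2 : F 2 = 3) (h3 : F 3 = 6)
    (hrec : ∀ m, 4 ≤ m →
      F m = 3 * F (m - 2) + ∑ i ∈ Finset.Icc 2 (m / 2), catalan (i - 1) * F (m - 2 * i)) :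
    ∀ k : ℕ, F (2 * k) = (2 * k + 1).choose k ∧ F (2 * k + 1) = 2 * (2 * k + 1).choose k := by
  have hF : F = closedForm :=
    eq_of_forall_eq_catalanRecStep hrec (fun _ => closedForm_eq_catalanRecStep) (by
      intro m hm
      interval_cases m <;> simp [closedForm, h0, h1, h2, h3])
  refine fun k => ⟨?_, ?_⟩ <;> simp [hF, closedForm, Nat.mul_add_div]
end

section
/- Let h(x) = Σ_{k≥0} C(2k+1,k) x^{2k} and g(x) = Σ_{k≥0} Cat_k x^{2k}. Then h(x)·g(x) = (h(x) − 1)/x^2 − 2h(x) as formal power series; equivalently, for all k ≥ 0, Σ_{i=0}^{k} Cat_i · C(2(k−i)+1, k−i) = C(2k+3, k+1) − 2·C(2k+1, k). -/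
/-!
The left-hand side is the case `j = 1` of `∑_{a + b = n} Cat_a · C(2b + j, b) = C(2n + j + 1, n)`,
proved by induction on `n` and, inside it, on `j`. Splitting off the term `b = 0` and applying
Pascal's rule to every other term gives the same recursion in `(n, j)` as Pascal's rule on the
right. For `j = 0`, the doubling `C(2b + 2, b + 1) = 2 C(2b + 1, b)` reduces to the case
`(n - 1, 1)`, and `Cat_n = C(2n, n) - C(2n, n + 1)` closes the gap.
-/

open Finset

lemma catalan_add_choose_succ (n : ℕ) :
    catalan n + (2 * n).choose (n + 1) = (2 * n).choose n := by
  apply Nat.eq_of_mul_eq_mul_left (Nat.succ_pos n)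
  have hcat : (n + 1) * catalan n = (2 * n).choose n := succ_mul_catalan_eq_centralBinom n
  have hchoose : (2 * n).choose (n + 1) * (n + 1) = (2 * n).choose n * n := by
    simpa [two_mul] using Nat.choose_succ_right_eq (2 * n) n
  rw [mul_add, hcat, mul_comm (n + 1) ((2 * n).choose (n + 1)), hchoose, Nat.succ_eq_add_one]
  ring

lemma choose_two_mul_add_two (m : ℕ) :
    (2 * m + 2).choose (m + 1) = 2 * (2 * m + 1).choose m := by
  rw [Nat.choose_succ_succ', Nat.choose_symm_half]
  ring

def catalanChooseConv (n j : ℕ) : ℕ :=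
  ∑ p ∈ antidiagonal n, catalan p.1 * (2 * p.2 + j).choose p.2

lemma catalanChooseConv_succ_zero (n : ℕ) :
    catalanChooseConv (n + 1) 0 = catalan (n + 1) + 2 * catalanChooseConv n 1 := by
  simp only [catalanChooseConv, Nat.sum_antidiagonal_succ', mul_sum]
  rw [Nat.choose_zero_right, mul_one]
  congr 1
  refine sum_congr rfl fun p _ ↦ ?_
  rw [show 2 * (p.2 + 1) + 0 = 2 * p.2 + 2 by ring, choose_two_mul_add_two]
  ring

lemma catalanChooseConv_succ_succ (n j : ℕ) :
    catalanChooseConv (n + 1) (j + 1) =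
      catalanChooseConv (n + 1) j + catalanChooseConv n (j + 2) := by
  simp only [catalanChooseConv, Nat.sum_antidiagonal_succ', add_assoc]
  rw [← sum_add_distrib, Nat.choose_zero_right, Nat.choose_zero_right]
  congr 1
  refine sum_congr rfl fun p _ ↦ ?_
  have hpascal : (2 * (p.2 + 1) + (j + 1)).choose (p.2 + 1)
      = (2 * p.2 + (j + 2)).choose p.2 + (2 * (p.2 + 1) + j).choose (p.2 + 1) := by
    rw [show 2 * (p.2 + 1) + (j + 1) = 2 * p.2 + (j + 2) + 1 by ring, Nat.choose_succ_succ',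
      show 2 * p.2 + (j + 2) = 2 * (p.2 + 1) + j by ring]
  rw [hpascal]
  ring

theorem catalanChooseConv_eq (n j : ℕ) : catalanChooseConv n j = (2 * n + j + 1).choose n := by
  induction n generalizing j with
  | zero => simp [catalanChooseConv]
  | succ n ihn =>
    induction j with
    | zero =>
      have hcat := catalan_add_choose_succ (n + 1)
      have hsymm : (2 * (n + 1)).choose (n + 1 + 1) = (2 * (n + 1)).choose n :=
        Nat.choose_symm_of_eq_add (by ring)
      rw [catalanChooseConv_succ_zero, ihn, show 2 * n + 1 + 1 = 2 * (n + 1) by ring,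
        show 2 * (n + 1) + 0 + 1 = 2 * (n + 1) + 1 by rfl, Nat.choose_succ_succ', ← hcat, hsymm]
      ring
    | succ j ihj =>
      rw [catalanChooseConv_succ_succ, ihj, ihn,
        show 2 * (n + 1) + (j + 1) + 1 = 2 * (n + 1) + j + 1 + 1 by ring,
        Nat.choose_succ_succ' (2 * (n + 1) + j + 1) n,
        show 2 * n + (j + 2) + 1 = 2 * (n + 1) + j + 1 by ring]
      ring

theorem catalan_convolution (k : ℕ) :
    (∑ i ∈ Finset.range (k + 1),
      (catalan i : ℤ) * ((2 * (k - i) + 1).choose (k - i) : ℤ))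
    = ((2 * k + 3).choose (k + 1) : ℤ) - 2 * ((2 * k + 1).choose k : ℤ) := by
  have hconv : ∑ i ∈ range (k + 1), (catalan i : ℤ) * ((2 * (k - i) + 1).choose (k - i) : ℤ)
      = ((2 * k + 2).choose k : ℤ) := by
    exact_mod_cast (Nat.sum_antidiagonal_eq_sum_range_succ
      (fun a b ↦ catalan a * (2 * b + 1).choose b) k).symm.trans (catalanChooseConv_eq k 1)
  have hpascal :
      (2 * k + 3).choose (k + 1) = (2 * k + 2).choose k + 2 * (2 * k + 1).choose k := by
    rw [Nat.choose_succ_succ', choose_two_mul_add_two]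
  rw [hconv, hpascal]
  push_cast
  ring
end
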